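/- arXiv:2212.04672 — 7 statements merged into one kernel-verified Lean document; each statement's English description precedes it below -/
import Mathlib

section
/- Suppose that for every x ∈ X the function y ↦ f(x,y) is concave on Y, and that the following feasibility assumption holds: for every x ∈ X there exists y in the relative interior of Y with Ax + By − c ≤ 0 componentwise. Then strong duality with respect to y holds for the inequality-constrained minimax problem: inf_{x∈X} sup_{y∈Y, Ax+By≤c} [f(x,y) + h(x) − g(y)] = inf_{λ∈ℝᵖ, λ≥0} inf_{x∈X} sup_{y∈Y} [f(x,y) − λᵀ(Ax+By−c) + h(x) − g(y)]. In particular the right-hand infimum over λ is finite and, for each x ∈ X, the inner suprema over the (nonempty compact) feasible set and over Y are attained. -/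
open scoped RealInnerProductSpace Pointwise

noncomputable section

/-- ℝ^d as a Euclidean space. -/
abbrev E (d : ℕ) := EuclideanSpace ℝ (Fin d)

/-- The Lagrangian `L(x,y,λ) = f(x,y) − λᵀ(Ax+By−c)`. -/
def lag {n m p : ℕ} (f : E n → E m → ℝ) (A : E n →L[ℝ] E p) (B : E m →L[ℝ] E p)
    (c : E p) (x : E n) (y : E m) (l : E p) : ℝ :=
  f x y - ⟪l, A x + B y - c⟫

/-- Partial gradient of the Lagrangian with respect to `x`. -/
def gradxL {n m p : ℕ} (f : E n → E m → ℝ) (A : E n →L[ℝ] E p) (B : E m →L[ℝ] E p)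
    (c : E p) (x : E n) (y : E m) (l : E p) : E n :=
  gradient (fun x' => lag f A B c x' y l) x

/-- Partial gradient of the Lagrangian with respect to `y`. -/
def gradyL {n m p : ℕ} (f : E n → E m → ℝ) (A : E n →L[ℝ] E p) (B : E m →L[ℝ] E p)
    (c : E p) (x : E n) (y : E m) (l : E p) : E m :=
  gradient (fun y' => lag f A B c x y' l) y

/-- Partial gradient of the Lagrangian with respect to `λ`. -/
def gradlL {n m p : ℕ} (f : E n → E m → ℝ) (A : E n →L[ℝ] E p) (B : E m →L[ℝ] E p)
    (c : E p) (x : E n) (y : E m) (l : E p) : E p :=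
  gradient (fun l' => lag f A B c x y l') l

/-- Assumption (Lip): all four partial-gradient Lipschitz estimates with constant `L`. -/
def LipGrad {n m : ℕ} (f : E n → E m → ℝ) (L : ℝ) : Prop :=
  (∀ x₁ x₂ y, ‖gradient (fun x => f x y) x₁ - gradient (fun x => f x y) x₂‖ ≤ L * ‖x₁ - x₂‖) ∧
  (∀ x y₁ y₂, ‖gradient (fun x => f x y₁) x - gradient (fun x => f x y₂) x‖ ≤ L * ‖y₁ - y₂‖) ∧
  (∀ x y₁ y₂, ‖gradient (f x) y₁ - gradient (f x) y₂‖ ≤ L * ‖y₁ - y₂‖) ∧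
  (∀ x₁ x₂ y, ‖gradient (f x₁) y - gradient (f x₂) y‖ ≤ L * ‖x₁ - x₂‖)

/-- `w = Prox^α_{φ,Z}(v)`: `w` minimizes `φ(z) + (α/2)‖z − v‖²` over `z ∈ Z`. -/
def IsProx {d : ℕ} (φ : E d → ℝ) (Z : Set (E d)) (α : ℝ) (v w : E d) : Prop :=
  w ∈ Z ∧ ∀ z ∈ Z, φ w + α / 2 * ‖w - v‖ ^ 2 ≤ φ z + α / 2 * ‖z - v‖ ^ 2

/-- Componentwise positive part: the Euclidean projection onto the nonnegative orthant. -/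
def posPart {p : ℕ} (v : E p) : E p := WithLp.toLp 2 (fun i => max 0 (v i))

/-- `Λ` together with its Euclidean projection `PΛ`: either the nonnegative orthant
(with componentwise positive part) or the whole space (with the identity). -/
def LamProj {p : ℕ} (Λ : Set (E p)) (PΛ : E p → E p) : Prop :=
  (Λ = {v : E p | ∀ i, 0 ≤ v i} ∧ ∀ v, PΛ v = posPart v) ∨
  (Λ = Set.univ ∧ ∀ v, PΛ v = v)

lemma euc_add_apply {d : ℕ} (x y : E d) (i : Fin d) : (x + y) i = x i + y i := rfl
lemma euc_smul_apply {d : ℕ} (a : ℝ) (x : E d) (i : Fin d) : (a • x) i = a * x i := rfl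

lemma duality_eps {m p : ℕ} {Y : Set (E m)} (hYcvx : Convex ℝ Y) (hYcpt : IsCompact Y)
    {φ : E m → ℝ} (hφc : Continuous φ) (hφconc : ConcaveOn ℝ Y φ)
    (B : E m →L[ℝ] E p) (v : E p)
    {pstar : ℝ} (hps : ∀ y ∈ Y, (∀ i, (B y + v) i ≤ 0) → φ y ≤ pstar)
    (hfe : ∃ y ∈ Y, ∀ i, (B y + v) i ≤ 0)
    {ε : ℝ} (hε : 0 < ε) :
    ∃ l : E p, (∀ i, 0 ≤ l i) ∧ ∀ y ∈ Y, φ y - ⟪l, B y + v⟫ ≤ pstar + ε := by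
  classical
  set K : Set (E p × ℝ) := {z | (∀ i, 0 ≤ z.1 i) ∧ z.2 ≤ 0} with hK
  have hKclosed : IsClosed K := by
    have : K = (⋂ i : Fin p, {z : E p × ℝ | 0 ≤ z.1 i}) ∩ {z : E p × ℝ | z.2 ≤ 0} := by
      ext z; simp [hK, Set.mem_iInter]
    rw [this]
    exact (isClosed_iInter fun i =>
      isClosed_le continuous_const ((EuclideanSpace.proj i : E p →L[ℝ] ℝ).continuous.comp continuous_fst)).inter
      (isClosed_le continuous_snd continuous_const)
  set Φ : E m → E p × ℝ := fun y => (B y + v, φ y) with hΦ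
  have hΦc : Continuous Φ := ((B.continuous.add continuous_const)).prodMk hφc
  set D : Set (E p × ℝ) := Φ '' Y + K with hD
  have hDclosed : IsClosed D := hKclosed.add_left_of_isCompact (hYcpt.image hΦc)
  have hmemD : ∀ z : E p × ℝ, z ∈ D ↔ ∃ y ∈ Y, (∀ i, (B y + v) i ≤ z.1 i) ∧ z.2 ≤ φ y := by
    intro z
    constructor
    · rintro ⟨a, ⟨y, hy, rfl⟩, k, hk, rfl⟩
      refine ⟨y, hy, fun i => ?_, ?_⟩
      · simp only [Prod.fst_add, hΦ, euc_add_apply]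
        linarith [hk.1 i]
      · simp only [Prod.snd_add, hΦ]
        linarith [hk.2]
    · rintro ⟨y, hy, h1, h2⟩
      refine ⟨Φ y, ⟨y, hy, rfl⟩, (z.1 - (B y + v), z.2 - φ y), ⟨fun i => ?_, ?_⟩, ?_⟩
      · show 0 ≤ z.1 i - (B y + v) i
        linarith [h1 i]
      · show z.2 - φ y ≤ 0
        linarith
      · simp [hΦ, Prod.ext_iff]
  have hDcvx : Convex ℝ D := by
    intro z hz w hw a b ha hb hab
    rw [hmemD] at hz hw
    rw [hmemD]
    obtain ⟨y₁, hy₁, hz1, hz2⟩ := hz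
    obtain ⟨y₂, hy₂, hw1, hw2⟩ := hw
    refine ⟨a • y₁ + b • y₂, hYcvx hy₁ hy₂ ha hb hab, fun i => ?_, ?_⟩
    · have hB : B (a • y₁ + b • y₂) + v = a • (B y₁ + v) + b • (B y₂ + v) := by
        have h5 : a • (B y₁ + v) + b • (B y₂ + v) = a • (B y₁) + b • (B y₂) + (a+b) • v := by
          rw [smul_add, smul_add, add_smul]; abel
        rw [h5, hab, one_smul, map_add, map_smul, map_smul]
      rw [hB]
      simp only [Prod.fst_add, Prod.smul_fst, euc_add_apply, euc_smul_apply]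
      exact add_le_add (mul_le_mul_of_nonneg_left (hz1 i) ha)
        (mul_le_mul_of_nonneg_left (hw1 i) hb)
    · have hcc := hφconc.2 hy₁ hy₂ ha hb hab
      simp only [Prod.snd_add, Prod.smul_snd, smul_eq_mul]
      have h3 : a * z.2 + b * w.2 ≤ a * φ y₁ + b * φ y₂ :=
        add_le_add (mul_le_mul_of_nonneg_left hz2 ha) (mul_le_mul_of_nonneg_left hw2 hb)
      have h4 : a • φ y₁ + b • φ y₂ ≤ φ (a • y₁ + b • y₂) := hcc
      simp only [smul_eq_mul] at h4
      linarith
  set q : E p × ℝ := (0, pstar + ε) with hq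
  have hqD : q ∉ D := by
    rw [hmemD]
    rintro ⟨y, hy, h1, h2⟩
    have hyfeas : ∀ i, (B y + v) i ≤ 0 := fun i => by simpa [hq] using h1 i
    have := hps y hy hyfeas
    simp only [hq] at h2
    linarith
  obtain ⟨ℓ, u, hqu, hu⟩ := geometric_hahn_banach_point_closed hDcvx hDclosed hqD
  set μ : ℝ := ℓ (0, 1) with hμ
  have hexp : ∀ (w : E p) (r : ℝ), ℓ (w, r) = ℓ (w, 0) + r * μ := by
    intro w r
    have hwr : (w, r) = (w, (0:ℝ)) + r • ((0 : E p), (1:ℝ)) := by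
      simp [Prod.ext_iff]
    rw [hwr, map_add, map_smul]
    simp [hμ]
  obtain ⟨y₀, hy₀, hy₀f⟩ := hfe
  have h0D : ((0 : E p), φ y₀) ∈ D :=
    (hmemD _).2 ⟨y₀, hy₀, fun i => by simpa using hy₀f i, le_refl _⟩
  have hμneg : μ < 0 := by
    have h1 : ℓ (0, pstar + ε) < ℓ (0, φ y₀) := lt_trans hqu (hu _ h0D)
    rw [hexp 0 (pstar + ε), hexp 0 (φ y₀)] at h1
    have hφ0 : φ y₀ ≤ pstar := hps y₀ hy₀ hy₀f
    nlinarith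
  set lam : E p := (InnerProductSpace.toDual ℝ (E p)).symm
    (ℓ.comp (ContinuousLinearMap.inl ℝ (E p) ℝ)) with hlam
  have hlamapp : ∀ w : E p, ⟪lam, w⟫ = ℓ (w, 0) := fun w => by
    rw [hlam, InnerProductSpace.toDual_symm_apply]; rfl
  have hlami : ∀ i, ⟪lam, (EuclideanSpace.single i (1:ℝ) : E p)⟫ = lam i := by
    intro i
    rw [real_inner_comm]
    rw [EuclideanSpace.inner_single_left]
    simp
  have hlamnn : ∀ i, 0 ≤ lam i := by
    intro i
    by_contra hneg
    push_neg at hneg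
    have hmem : ∀ t : ℝ, 0 ≤ t → ((t • EuclideanSpace.single i (1:ℝ) : E p), φ y₀) ∈ D := by
      intro t ht
      refine (hmemD _).2 ⟨y₀, hy₀, fun j => ?_, le_refl _⟩
      show (B y₀ + v) j ≤ (t • EuclideanSpace.single i (1:ℝ) : E p) j
      rw [euc_smul_apply]
      rcases eq_or_ne j i with rfl | hji
      · rw [EuclideanSpace.single_apply, if_pos rfl]
        have := hy₀f j; nlinarith
      · rw [EuclideanSpace.single_apply, if_neg hji]
        simpa using hy₀f j
    have hlb : ∀ t : ℝ, 0 ≤ t → u < t * lam i + φ y₀ * μ := by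
      intro t ht
      have h6 := hu _ (hmem t ht)
      rw [hexp] at h6
      have h2 : ℓ ((t • EuclideanSpace.single i (1:ℝ) : E p), 0) = t * lam i := by
        rw [← hlamapp, real_inner_smul_right, hlami]
      rw [h2] at h6
      linarith
    set t₀ : ℝ := (u - φ y₀ * μ - 1) / lam i with ht₀
    have hti : t₀ * lam i = u - φ y₀ * μ - 1 := by
      rw [ht₀, div_mul_cancel₀]
      exact ne_of_lt hneg
    rcases le_or_gt 0 t₀ with h | h
    · have := hlb t₀ h
      rw [hti] at this
      linarith
    · have h7 := hlb 0 le_rfl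
      have h8 : (0:ℝ) < t₀ * lam i := mul_pos_of_neg_of_neg h hneg
      rw [hti] at h8
      nlinarith
  refine ⟨(-μ)⁻¹ • lam, fun i => ?_, fun y hy => ?_⟩
  · rw [euc_smul_apply]
    exact mul_nonneg (inv_nonneg.2 (by linarith)) (hlamnn i)
  · have hyD : Φ y ∈ D := (hmemD _).2 ⟨y, hy, fun i => le_refl _, le_refl _⟩
    have h9 : ℓ q < ℓ (Φ y) := lt_trans hqu (hu _ hyD)
    have hΦy : ℓ (Φ y) = ℓ (B y + v, 0) + φ y * μ := hexp _ _
    have hqv : ℓ q = (pstar + ε) * μ := by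
      rw [hq, hexp]; simp [Prod.mk_zero_zero]
    rw [hΦy, hqv, ← hlamapp] at h9
    have hsm : ⟪(-μ)⁻¹ • lam, B y + v⟫ = (-μ)⁻¹ * ⟪lam, B y + v⟫ := real_inner_smul_left _ _ _
    rw [hsm]
    have hmpos : 0 < -μ := by linarith
    have hne : -μ ≠ 0 := ne_of_gt hmpos
    have h10 := mul_lt_mul_of_pos_right h9 (inv_pos.2 hmpos)
    have h12 : (pstar + ε) * μ * (-μ)⁻¹ = -(pstar + ε) := by
      rw [mul_assoc, inv_neg, mul_neg, mul_inv_cancel₀ (ne_of_lt hμneg), mul_neg, mul_one]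
    have h13 : ∀ s : ℝ, (s + φ y * μ) * (-μ)⁻¹ = (-μ)⁻¹ * s - φ y := by
      intro s; field_simp [ne_of_lt hμneg]; ring
    rw [h12, h13] at h10
    linarith

lemma exists_sSup_image {d : ℕ} {S : Set (E d)} (hS : IsCompact S) (hne : S.Nonempty)
    {ψ : E d → ℝ} (hψ : Continuous ψ) :
    ∃ y ∈ S, (∀ z ∈ S, ψ z ≤ ψ y) ∧ ψ y = sSup (ψ '' S) := by
  obtain ⟨y, hyS, hmax⟩ := hS.exists_isMaxOn hne hψ.continuousOn
  refine ⟨y, hyS, fun z hz => hmax hz, ?_⟩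
  have hg : IsGreatest (ψ '' S) (ψ y) :=
    ⟨⟨y, hyS, rfl⟩, by rintro r ⟨z, hz, rfl⟩; exact hmax hz⟩
  exact hg.csSup_eq.symm

lemma inner_nonpos_of {p : ℕ} (l w : E p) (hl : ∀ i, 0 ≤ l i) (hw : ∀ i, w i ≤ 0) :
    ⟪l, w⟫ ≤ 0 := by
  rw [PiLp.inner_apply]
  refine Finset.sum_nonpos fun i _ => ?_
  have : (⟪l i, w i⟫ : ℝ) = l i * w i := by
    simp [RCLike.inner_apply]; ring
  rw [this]
  exact mul_nonpos_of_nonneg_of_nonpos (hl i) (hw i)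


theorem main_abstract {n m p : ℕ} (X : Set (E n)) (Y : Set (E m))
    (hXne : X.Nonempty) (hXcpt : IsCompact X)
    (hYne : Y.Nonempty) (hYcvx : Convex ℝ Y) (hYcpt : IsCompact Y)
    (φ : E n → E m → ℝ) (hφc : Continuous (Function.uncurry φ))
    (hφconc : ∀ x ∈ X, ConcaveOn ℝ Y (φ x))
    (A : E n →L[ℝ] E p) (B : E m →L[ℝ] E p) (c : E p)
    (hfeas : ∀ x ∈ X, ∃ y ∈ Y, ∀ i, (A x + B y - c) i ≤ 0) :
    sInf ((fun x => sSup ((fun y => φ x y) ''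
          {y ∈ Y | ∀ i, (A x + B y - c) i ≤ 0})) '' X)
      = sInf ((fun l => sInf ((fun x =>
          sSup ((fun y => φ x y - ⟪l, A x + B y - c⟫) '' Y)) '' X)) ''
          {l : E p | ∀ i, 0 ≤ l i})
    ∧ BddBelow ((fun l => sInf ((fun x =>
          sSup ((fun y => φ x y - ⟪l, A x + B y - c⟫) '' Y)) '' X)) ''
          {l : E p | ∀ i, 0 ≤ l i})
    ∧ (∀ x ∈ X, ∃ y ∈ Y, (∀ i, (A x + B y - c) i ≤ 0) ∧
          φ x y = sSup ((fun y' => φ x y') ''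
                {y' ∈ Y | ∀ i, (A x + B y' - c) i ≤ 0}))
    ∧ (∀ x ∈ X, ∀ l ∈ {l : E p | ∀ i, 0 ≤ l i}, ∃ y ∈ Y,
          φ x y - ⟪l, A x + B y - c⟫
            = sSup ((fun y' => φ x y' - ⟪l, A x + B y' - c⟫) '' Y)) := by
  classical
  have hφxc : ∀ x, Continuous (φ x) := fun x => hφc.comp (Continuous.prodMk_right x)
  have hlagc : ∀ (x : E n) (l : E p),
      Continuous (fun y => φ x y - ⟪l, A x + B y - c⟫) :=
    fun x l => (hφxc x).sub (Continuous.inner continuous_const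
      ((continuous_const.add B.continuous).sub continuous_const))
  have hScpt : ∀ x : E n, IsCompact {y ∈ Y | ∀ i, (A x + B y - c) i ≤ 0} := by
    intro x
    have h1 : {y ∈ Y | ∀ i, (A x + B y - c) i ≤ 0}
        = Y ∩ ⋂ i, {y : E m | (A x + B y - c) i ≤ 0} := by
      ext y; simp [Set.mem_iInter]
    rw [h1]
    refine hYcpt.inter_right (isClosed_iInter fun i => isClosed_le ?_ continuous_const)
    exact ((EuclideanSpace.proj i : E p →L[ℝ] ℝ).continuous).comp
      ((continuous_const.add B.continuous).sub continuous_const)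
  have hSne : ∀ x ∈ X, ({y ∈ Y | ∀ i, (A x + B y - c) i ≤ 0}).Nonempty := by
    intro x hx
    obtain ⟨y₀, hy₀Y, hy₀f⟩ := hfeas x hx
    exact ⟨y₀, hy₀Y, hy₀f⟩
  -- attainment on feasible set (conjunct 3)
  have hPmax : ∀ x ∈ X, ∃ y ∈ Y, (∀ i, (A x + B y - c) i ≤ 0) ∧
      φ x y = sSup ((fun y' => φ x y') '' {y' ∈ Y | ∀ i, (A x + B y' - c) i ≤ 0}) := by
    intro x hx
    obtain ⟨y, hyS, _, heq⟩ := exists_sSup_image (hScpt x) (hSne x hx) (hφxc x)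
    exact ⟨y, hyS.1, hyS.2, heq⟩
  -- attainment over Y (conjunct 4)
  have hLmax : ∀ (x : E n) (l : E p), ∃ y ∈ Y,
      φ x y - ⟪l, A x + B y - c⟫
        = sSup ((fun y' => φ x y' - ⟪l, A x + B y' - c⟫) '' Y) := by
    intro x l
    obtain ⟨y, hyY, _, heq⟩ := exists_sSup_image hYcpt hYne (hlagc x l)
    exact ⟨y, hyY, heq⟩
  -- global lower bound
  obtain ⟨z₀, hz₀, hMmin⟩ := (hXcpt.prod hYcpt).exists_isMinOn (hXne.prod hYne)
    hφc.continuousOn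
  have hMle : ∀ x ∈ X, ∀ y ∈ Y, Function.uncurry φ z₀ ≤ φ x y :=
    fun x hx y hy => hMmin (Set.mk_mem_prod hx hy)
  -- bddAbove facts
  have hbddY : ∀ (x : E n) (l : E p),
      BddAbove ((fun y => φ x y - ⟪l, A x + B y - c⟫) '' Y) :=
    fun x l => hYcpt.bddAbove_image (hlagc x l).continuousOn
  have hbddS : ∀ x : E n,
      BddAbove ((fun y' => φ x y') '' {y' ∈ Y | ∀ i, (A x + B y' - c) i ≤ 0}) :=
    fun x => (hScpt x).bddAbove_image (hφxc x).continuousOn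
  have hPub : ∀ x ∈ X, ∀ y ∈ Y, (∀ i, (A x + B y - c) i ≤ 0) →
      φ x y ≤ sSup ((fun y' => φ x y') '' {y' ∈ Y | ∀ i, (A x + B y' - c) i ≤ 0}) :=
    fun x _ y hy hyf => le_csSup (hbddS x) ⟨y, ⟨hy, hyf⟩, rfl⟩
  have hMP : ∀ x ∈ X, Function.uncurry φ z₀
      ≤ sSup ((fun y' => φ x y') '' {y' ∈ Y | ∀ i, (A x + B y' - c) i ≤ 0}) := by
    intro x hx
    obtain ⟨y, hyY, _, heq⟩ := hPmax x hx
    rw [← heq]; exact hMle x hx y hyY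
  -- weak duality
  have hweak : ∀ x ∈ X, ∀ l : E p, (∀ i, 0 ≤ l i) →
      sSup ((fun y' => φ x y') '' {y' ∈ Y | ∀ i, (A x + B y' - c) i ≤ 0})
        ≤ sSup ((fun y => φ x y - ⟪l, A x + B y - c⟫) '' Y) := by
    intro x hx l hl
    obtain ⟨y, hyY, hyf, heq⟩ := hPmax x hx
    rw [← heq]
    have h1 : φ x y ≤ φ x y - ⟪l, A x + B y - c⟫ := by
      have := inner_nonpos_of l (A x + B y - c) hl hyf
      linarith
    exact h1.trans (le_csSup (hbddY x l) ⟨y, hyY, rfl⟩)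
  -- primal image facts
  have hPimne : ((fun x => sSup ((fun y => φ x y) ''
      {y ∈ Y | ∀ i, (A x + B y - c) i ≤ 0})) '' X).Nonempty := hXne.image _
  have hPimbdd : BddBelow ((fun x => sSup ((fun y => φ x y) ''
      {y ∈ Y | ∀ i, (A x + B y - c) i ≤ 0})) '' X) := by
    refine ⟨Function.uncurry φ z₀, ?_⟩
    rintro r ⟨x, hx, rfl⟩
    exact hMP x hx
  have hLHSle : ∀ x ∈ X,
      sInf ((fun x => sSup ((fun y => φ x y) ''
        {y ∈ Y | ∀ i, (A x + B y - c) i ≤ 0})) '' X)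
      ≤ sSup ((fun y => φ x y) '' {y ∈ Y | ∀ i, (A x + B y - c) i ≤ 0}) :=
    fun x hx => csInf_le hPimbdd ⟨x, hx, rfl⟩
  -- dual image over X facts
  have hDimne : ∀ l : E p, ((fun x =>
      sSup ((fun y => φ x y - ⟪l, A x + B y - c⟫) '' Y)) '' X).Nonempty :=
    fun l => hXne.image _
  have hDimbdd : ∀ l : E p, (∀ i, 0 ≤ l i) → BddBelow ((fun x =>
      sSup ((fun y => φ x y - ⟪l, A x + B y - c⟫) '' Y)) '' X) := by
    intro l hl
    refine ⟨Function.uncurry φ z₀, ?_⟩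
    rintro r ⟨x, hx, rfl⟩
    exact (hMP x hx).trans (hweak x hx l hl)
  have hQge : ∀ l : E p, (∀ i, 0 ≤ l i) →
      sInf ((fun x => sSup ((fun y => φ x y) ''
          {y ∈ Y | ∀ i, (A x + B y - c) i ≤ 0})) '' X)
      ≤ sInf ((fun x =>
          sSup ((fun y => φ x y - ⟪l, A x + B y - c⟫) '' Y)) '' X) := by
    intro l hl
    refine le_csInf (hDimne l) ?_
    rintro r ⟨x, hx, rfl⟩
    exact (hLHSle x hx).trans (hweak x hx l hl)
  have hbdd2 : BddBelow ((fun l => sInf ((fun x =>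
      sSup ((fun y => φ x y - ⟪l, A x + B y - c⟫) '' Y)) '' X)) ''
      {l : E p | ∀ i, 0 ≤ l i}) := by
    refine ⟨sInf ((fun x => sSup ((fun y => φ x y) ''
      {y ∈ Y | ∀ i, (A x + B y - c) i ≤ 0})) '' X), ?_⟩
    rintro r ⟨l, hl, rfl⟩
    exact hQge l hl
  have hΛne : ({l : E p | ∀ i, 0 ≤ l i}).Nonempty := ⟨0, fun i => by simp⟩
  have hge : sInf ((fun x => sSup ((fun y => φ x y) ''
        {y ∈ Y | ∀ i, (A x + B y - c) i ≤ 0})) '' X)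
      ≤ sInf ((fun l => sInf ((fun x =>
        sSup ((fun y => φ x y - ⟪l, A x + B y - c⟫) '' Y)) '' X)) ''
        {l : E p | ∀ i, 0 ≤ l i}) := by
    refine le_csInf (hΛne.image _) ?_
    rintro r ⟨l, hl, rfl⟩
    exact hQge l hl
  have hle : sInf ((fun l => sInf ((fun x =>
        sSup ((fun y => φ x y - ⟪l, A x + B y - c⟫) '' Y)) '' X)) ''
        {l : E p | ∀ i, 0 ≤ l i})
      ≤ sInf ((fun x => sSup ((fun y => φ x y) ''
        {y ∈ Y | ∀ i, (A x + B y - c) i ≤ 0})) '' X) := by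
    refine le_csInf hPimne ?_
    rintro r ⟨x, hx, rfl⟩
    refine le_of_forall_pos_le_add ?_
    intro ε hε
    have hrw : ∀ y : E m, B y + (A x - c) = A x + B y - c := by intro y; abel
    obtain ⟨l, hl, hineq⟩ := duality_eps hYcvx hYcpt (hφxc x) (hφconc x hx) B (A x - c)
      (pstar := sSup ((fun y => φ x y) '' {y ∈ Y | ∀ i, (A x + B y - c) i ≤ 0}))
      (fun y hy hyf => hPub x hx y hy (fun i => by rw [← hrw y]; exact hyf i))
      (by
        obtain ⟨y₀, hy₀Y, hy₀f⟩ := hfeas x hx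
        exact ⟨y₀, hy₀Y, fun i => by rw [hrw y₀]; exact hy₀f i⟩)
      hε
    have hDle : sSup ((fun y => φ x y - ⟪l, A x + B y - c⟫) '' Y)
        ≤ sSup ((fun y => φ x y) '' {y ∈ Y | ∀ i, (A x + B y - c) i ≤ 0}) + ε := by
      refine csSup_le (hYne.image _) ?_
      rintro s ⟨y, hy, rfl⟩
      have h2 := hineq y hy
      rw [hrw y] at h2
      exact h2
    calc sInf ((fun l => sInf ((fun x =>
            sSup ((fun y => φ x y - ⟪l, A x + B y - c⟫) '' Y)) '' X)) ''
            {l : E p | ∀ i, 0 ≤ l i})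
        ≤ sInf ((fun x =>
            sSup ((fun y => φ x y - ⟪l, A x + B y - c⟫) '' Y)) '' X) :=
          csInf_le hbdd2 ⟨l, hl, rfl⟩
      _ ≤ sSup ((fun y => φ x y - ⟪l, A x + B y - c⟫) '' Y) :=
          csInf_le (hDimbdd l hl) ⟨x, hx, rfl⟩
      _ ≤ _ := hDle
  exact ⟨le_antisymm hge hle, hbdd2, hPmax, fun x hx l _ => hLmax x l⟩


/-- Theorem 2.1, inequality case: strong duality with respect to `y`
for the inequality-constrained minimax problem, together with finiteness of the dual
infimum over `λ ≥ 0` and attainment of the inner suprema. -/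
theorem strong_duality_inequality_constraints
    {n m p : ℕ} (X : Set (E n)) (Y : Set (E m))
    (hXne : X.Nonempty) (hXcvx : Convex ℝ X) (hXcpt : IsCompact X)
    (hYne : Y.Nonempty) (hYcvx : Convex ℝ Y) (hYcpt : IsCompact Y)
    (f : E n → E m → ℝ) (hf : ContDiff ℝ 1 (Function.uncurry f))
    (h : E n → ℝ) (hhcvx : ConvexOn ℝ Set.univ h) (hhcont : Continuous h)
    (g : E m → ℝ) (hgcvx : ConvexOn ℝ Set.univ g) (hgcont : Continuous g)
    (A : E n →L[ℝ] E p) (B : E m →L[ℝ] E p) (c : E p)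
    (hconc : ∀ x ∈ X, ConcaveOn ℝ Y (f x))
    (hfeas : ∀ x ∈ X, ∃ y ∈ intrinsicInterior ℝ Y, ∀ i, (A x + B y - c) i ≤ 0) :
    sInf ((fun x => sSup ((fun y => f x y + h x - g y) ''
          {y ∈ Y | ∀ i, (A x + B y - c) i ≤ 0})) '' X)
      = sInf ((fun l => sInf ((fun x =>
          sSup ((fun y => lag f A B c x y l + h x - g y) '' Y)) '' X)) ''
          {l : E p | ∀ i, 0 ≤ l i})
    ∧ BddBelow ((fun l => sInf ((fun x =>
          sSup ((fun y => lag f A B c x y l + h x - g y) '' Y)) '' X)) ''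
          {l : E p | ∀ i, 0 ≤ l i})
    ∧ (∀ x ∈ X, ∃ y ∈ Y, (∀ i, (A x + B y - c) i ≤ 0) ∧
          f x y + h x - g y
            = sSup ((fun y' => f x y' + h x - g y') ''
                {y' ∈ Y | ∀ i, (A x + B y' - c) i ≤ 0}))
    ∧ (∀ x ∈ X, ∀ l ∈ {l : E p | ∀ i, 0 ≤ l i}, ∃ y ∈ Y,
          lag f A B c x y l + h x - g y
            = sSup ((fun y' => lag f A B c x y' l + h x - g y') '' Y)) := by
  have hkey : ∀ (x : E n) (y : E m) (l : E p),
      lag f A B c x y l + h x - g y = (f x y + h x - g y) - ⟪l, A x + B y - c⟫ := by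
    intro x y l
    show (f x y - ⟪l, A x + B y - c⟫) + h x - g y = _
    ring
  simp only [hkey]
  have hφc : Continuous (Function.uncurry fun x y => f x y + h x - g y) := by
    have h1 : (Function.uncurry fun x y => f x y + h x - g y)
        = fun q : E n × E m => f q.1 q.2 + h q.1 - g q.2 := rfl
    rw [h1]
    exact (hf.continuous.add (hhcont.comp continuous_fst)).sub (hgcont.comp continuous_snd)
  have hφconc : ∀ x ∈ X, ConcaveOn ℝ Y fun y => f x y + h x - g y := by
    intro x hx
    have h1 : ConcaveOn ℝ Y fun y => f x y + h x :=
      (hconc x hx).add (concaveOn_const _ hYcvx)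
    exact h1.sub (hgcvx.subset (Set.subset_univ _) hYcvx)
  have hfeas2 : ∀ x ∈ X, ∃ y ∈ Y, ∀ i, (A x + B y - c) i ≤ 0 := by
    intro x hx
    obtain ⟨y, hyi, hyf⟩ := hfeas x hx
    exact ⟨y, intrinsicInterior_subset hyi, hyf⟩
  exact main_abstract X Y hXne hXcpt hYne hYcvx hYcpt
    (fun x y => f x y + h x - g y) hφc hφconc A B c hfeas2
end
end

section
/- Suppose that for every x ∈ X the function y ↦ f(x,y) is concave on Y, and that for every x ∈ X the feasible set {y ∈ Y : Ax + By = c} is nonempty. Then strong duality with respect to y holds for the equality-constrained minimax problem: inf_{x∈X} sup_{y∈Y, Ax+By=c} [f(x,y) + h(x) − g(y)] = inf_{λ∈ℝᵖ} inf_{x∈X} sup_{y∈Y} [f(x,y) − λᵀ(Ax+By−c) + h(x) − g(y)]. In particular the right-hand infimum over λ ∈ ℝᵖ is finite and, for each x ∈ X, the inner suprema over the (nonempty compact) feasible set and over Y are attained. -/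
open scoped RealInnerProductSpace
open Pointwise

noncomputable section

/-- Attainment of the sup of a continuous function on a nonempty compact set. -/
lemma exists_max_image {d : ℕ} {K : Set (E d)} (hne : K.Nonempty) (hcpt : IsCompact K)
    {ψ : E d → ℝ} (hc : Continuous ψ) :
    ∃ y ∈ K, (∀ z ∈ K, ψ z ≤ ψ y) ∧ ψ y = sSup (ψ '' K) := by
  obtain ⟨y, hyK, hmax⟩ := hcpt.exists_isMaxOn hne hc.continuousOn
  refine ⟨y, hyK, fun z hz => hmax hz, ?_⟩
  exact (IsGreatest.csSup_eq ⟨Set.mem_image_of_mem _ hyK, fun b ⟨z, hz, hzb⟩ => hzb ▸ hmax hz⟩).symm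

/-- Key separation lemma: Lagrangian duality for a concave maximization with affine
equality constraints over a convex compact set, with nonempty feasible set. -/
lemma dual_le_of_sep {m p : ℕ} {Y : Set (E m)} (hYne : Y.Nonempty) (hYcvx : Convex ℝ Y)
    (hYcpt : IsCompact Y) {φ : E m → ℝ} (hφc : Continuous φ) (hφconc : ConcaveOn ℝ Y φ)
    (T : E m →L[ℝ] E p) (e : E p) (hfeas : ∃ y ∈ Y, T y + e = 0)
    {v : ℝ} (hv : ∀ y ∈ Y, T y + e = 0 → φ y ≤ v)
    {ε : ℝ} (hε : 0 < ε) :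
    ∃ l : E p, ∀ y ∈ Y, φ y - ⟪l, T y + e⟫ ≤ v + ε := by
  set constr : E m → E p := fun y => T y + e with hconstr
  have hconstrc : Continuous constr := T.continuous.add continuous_const
  set S : Set (E p × ℝ) := (fun y => (constr y, φ y)) '' Y with hS
  set C : Set (E p × ℝ) := {q | q.1 = 0 ∧ q.2 ≤ 0} with hC
  set K : Set (E p × ℝ) := S + C with hK
  have hScpt : IsCompact S := hYcpt.image (hconstrc.prodMk hφc)
  have hCclosed : IsClosed C :=
    (isClosed_eq continuous_fst continuous_const).inter (isClosed_le continuous_snd continuous_const)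
  have hKclosed : IsClosed K := hCclosed.add_left_of_isCompact hScpt
  have memK : ∀ z : E p × ℝ, z ∈ K ↔ ∃ y ∈ Y, z.1 = constr y ∧ z.2 ≤ φ y := by
    intro z
    constructor
    · rintro ⟨a, ⟨y, hy, rfl⟩, b, ⟨hb1, hb2⟩, rfl⟩
      refine ⟨y, hy, by simp [hb1], ?_⟩
      have : ((constr y, φ y) + b).2 = φ y + b.2 := rfl
      rw [this]; linarith
    · rintro ⟨y, hy, h1, h2⟩
      refine ⟨(constr y, φ y), ⟨y, hy, rfl⟩, (0, z.2 - φ y), ⟨rfl, sub_nonpos.mpr h2⟩, ?_⟩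
      show (constr y, φ y) + ((0 : E p), z.2 - φ y) = z
      have h3 : (constr y, φ y) + ((0 : E p), z.2 - φ y)
          = (constr y + 0, φ y + (z.2 - φ y)) := rfl
      rw [h3, add_zero, show φ y + (z.2 - φ y) = z.2 by ring, ← h1]
  have hKcvx : Convex ℝ K := by
    intro z₁ hz₁ z₂ hz₂ a b ha hb hab
    rw [memK] at hz₁ hz₂ ⊢
    obtain ⟨y₁, hy₁, hz11, hz12⟩ := hz₁
    obtain ⟨y₂, hy₂, hz21, hz22⟩ := hz₂
    refine ⟨a • y₁ + b • y₂, hYcvx hy₁ hy₂ ha hb hab, ?_, ?_⟩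
    · show (a • z₁ + b • z₂).1 = constr (a • y₁ + b • y₂)
      have h0 : (a • z₁ + b • z₂).1 = a • z₁.1 + b • z₂.1 := rfl
      have he : a • e + b • e = e := by rw [← add_smul, hab, one_smul]
      rw [h0, hz11, hz21]
      simp only [hconstr, map_add, map_smul]
      rw [smul_add, smul_add, add_add_add_comm, he]
    · show (a • z₁ + b • z₂).2 ≤ φ (a • y₁ + b • y₂)
      have h1 : (a • z₁ + b • z₂).2 = a * z₁.2 + b * z₂.2 := rfl
      have h2 := hφconc.2 hy₁ hy₂ ha hb hab
      have h3 : a * z₁.2 ≤ a * φ y₁ := mul_le_mul_of_nonneg_left hz12 ha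
      have h4 : b * z₂.2 ≤ b * φ y₂ := mul_le_mul_of_nonneg_left hz22 hb
      simp only [smul_eq_mul] at h2
      rw [h1]
      linarith
  obtain ⟨y₀, hy₀Y, hy₀⟩ := hfeas
  have hzK : ((0 : E p), v + ε) ∉ K := by
    rw [memK]
    rintro ⟨y, hy, h1, h2⟩
    have : φ y ≤ v := hv y hy (by simpa [hconstr] using h1.symm)
    simp only at h2
    linarith
  obtain ⟨ψ, u, hsep, hzψ⟩ := geometric_hahn_banach_closed_point hKcvx hKclosed hzK
  set σ : ℝ := ψ (0, 1) with hσdef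
  have hψsplit : ∀ (w : E p) (t : ℝ), ψ (w, t) = ψ (w, 0) + t * σ := by
    intro w t
    have : (w, t) = (w, (0:ℝ)) + t • ((0 : E p), (1:ℝ)) := by
      ext <;> simp
    rw [this, map_add, map_smul, smul_eq_mul]
  have hy₀mem : ∀ t : ℝ, t ≤ φ y₀ → ((0 : E p), t) ∈ K := by
    intro t ht
    rw [memK]
    exact ⟨y₀, hy₀Y, by simp [hconstr, ← hy₀], ht⟩
  have hψ00 : ψ ((0 : E p), (0:ℝ)) = 0 := by
    have : ((0 : E p), (0:ℝ)) = (0 : E p × ℝ) := rfl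
    rw [this, map_zero]
  have hσnn : 0 ≤ σ := by
    by_contra hneg
    push_neg at hneg
    have ht := hsep _ (hy₀mem (min (φ y₀) ((u + 1) / σ)) (min_le_left _ _))
    rw [hψsplit, hψ00, zero_add] at ht
    have h5 : min (φ y₀) ((u + 1) / σ) ≤ (u + 1) / σ := min_le_right _ _
    have hcancel : ((u + 1) / σ) * σ = u + 1 := div_mul_cancel₀ _ (ne_of_lt hneg)
    have hmul : ((u + 1) / σ) * σ ≤ (min (φ y₀) ((u + 1) / σ)) * σ :=
      mul_le_mul_of_nonpos_right h5 (le_of_lt hneg)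
    linarith
  have hσpos : 0 < σ := by
    rcases lt_or_eq_of_le hσnn with h | h
    · exact h
    · exfalso
      have h1 := hsep _ (hy₀mem (φ y₀) le_rfl)
      rw [hψsplit, hψ00, zero_add, ← h, mul_zero] at h1
      rw [hψsplit, hψ00, zero_add, ← h, mul_zero] at hzψ
      linarith
  set ℓ : E p →L[ℝ] ℝ := ψ.comp (ContinuousLinearMap.inl ℝ (E p) ℝ) with hℓ
  set l₀ : E p := (InnerProductSpace.toDual ℝ (E p)).symm ℓ with hl₀
  have hl₀app : ∀ w : E p, ⟪l₀, w⟫ = ψ (w, 0) := by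
    intro w
    rw [hl₀, InnerProductSpace.toDual_symm_apply]
    rfl
  refine ⟨-(σ⁻¹) • l₀, fun y hy => ?_⟩
  have hmem : (constr y, φ y) ∈ K := (memK _).2 ⟨y, hy, rfl, le_rfl⟩
  have h1 := hsep _ hmem
  rw [hψsplit] at h1
  rw [hψsplit, hψ00, zero_add] at hzψ
  have h2 : ψ (constr y, 0) + φ y * σ ≤ (v + ε) * σ := by linarith
  rw [← hl₀app] at h2
  have h3 : ⟪-(σ⁻¹) • l₀, T y + e⟫ = -(σ⁻¹) * ⟪l₀, constr y⟫ := by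
    rw [real_inner_smul_left]
  rw [h3]
  have h4 : φ y + σ⁻¹ * ⟪l₀, constr y⟫ ≤ v + ε := by
    rw [← mul_le_mul_iff_of_pos_right hσpos]
    calc (φ y + σ⁻¹ * ⟪l₀, constr y⟫) * σ = φ y * σ + (σ⁻¹ * σ) * ⟪l₀, constr y⟫ := by ring
    _ = φ y * σ + ⟪l₀, constr y⟫ := by rw [inv_mul_cancel₀ (ne_of_gt hσpos), one_mul]
    _ ≤ (v + ε) * σ := by linarith
  linarith

/-- Theorem 2.1, equality case: strong duality with respect to `y`
for the equality-constrained minimax problem, together with finiteness of the dual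
infimum over `λ ∈ ℝᵖ` and attainment of the inner suprema. -/
theorem strong_duality_equality_constraints
    {n m p : ℕ} (X : Set (E n)) (Y : Set (E m))
    (hXne : X.Nonempty) (hXcvx : Convex ℝ X) (hXcpt : IsCompact X)
    (hYne : Y.Nonempty) (hYcvx : Convex ℝ Y) (hYcpt : IsCompact Y)
    (f : E n → E m → ℝ) (hf : ContDiff ℝ 1 (Function.uncurry f))
    (h : E n → ℝ) (hhcvx : ConvexOn ℝ Set.univ h) (hhcont : Continuous h)
    (g : E m → ℝ) (hgcvx : ConvexOn ℝ Set.univ g) (hgcont : Continuous g)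
    (A : E n →L[ℝ] E p) (B : E m →L[ℝ] E p) (c : E p)
    (hconc : ∀ x ∈ X, ConcaveOn ℝ Y (f x))
    (hfeas : ∀ x ∈ X, ∃ y ∈ Y, A x + B y = c) :
    sInf ((fun x => sSup ((fun y => f x y + h x - g y) ''
          {y ∈ Y | A x + B y = c})) '' X)
      = sInf (Set.range (fun l : E p => sInf ((fun x =>
          sSup ((fun y => lag f A B c x y l + h x - g y) '' Y)) '' X)))
    ∧ BddBelow (Set.range (fun l : E p => sInf ((fun x =>
          sSup ((fun y => lag f A B c x y l + h x - g y) '' Y)) '' X)))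
    ∧ (∀ x ∈ X, ∃ y ∈ Y, A x + B y = c ∧
          f x y + h x - g y
            = sSup ((fun y' => f x y' + h x - g y') '' {y' ∈ Y | A x + B y' = c}))
    ∧ (∀ x ∈ X, ∀ l : E p, ∃ y ∈ Y,
          lag f A B c x y l + h x - g y
            = sSup ((fun y' => lag f A B c x y' l + h x - g y') '' Y)) := by
  -- continuity facts
  have hfc : Continuous (Function.uncurry f) := hf.continuous
  have hfx : ∀ x : E n, Continuous (f x) := fun x => hfc.comp (Continuous.prodMk_right x)
  have hφcont : ∀ x : E n, Continuous (fun y => f x y + h x - g y) :=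
    fun x => ((hfx x).add continuous_const).sub hgcont
  have hlagcont : ∀ (x : E n) (l : E p),
      Continuous (fun y => lag f A B c x y l + h x - g y) := by
    intro x l
    simp only [lag]
    exact ((((hfx x).sub (continuous_const.inner
      ((continuous_const.add B.continuous).sub continuous_const))).add
      continuous_const).sub hgcont)
  -- feasible sets
  have hFcpt : ∀ x : E n, IsCompact {y ∈ Y | A x + B y = c} := fun x =>
    hYcpt.inter_right (isClosed_eq (continuous_const.add B.continuous) continuous_const)
  have hFne : ∀ x ∈ X, Set.Nonempty {y ∈ Y | A x + B y = c} := by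
    intro x hx
    obtain ⟨y, hy, hyc⟩ := hfeas x hx
    exact ⟨y, hy, hyc⟩
  -- attainment over the feasible set (part 3)
  have key3 : ∀ x ∈ X, ∃ y ∈ Y, A x + B y = c ∧
      f x y + h x - g y
        = sSup ((fun y' => f x y' + h x - g y') '' {y' ∈ Y | A x + B y' = c}) := by
    intro x hx
    obtain ⟨y, hyF, _, hsup⟩ := exists_max_image (hFne x hx) (hFcpt x) (hφcont x)
    exact ⟨y, hyF.1, hyF.2, hsup⟩
  -- attainment over Y (part 4)
  have key4 : ∀ x ∈ X, ∀ l : E p, ∃ y ∈ Y,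
      lag f A B c x y l + h x - g y
        = sSup ((fun y' => lag f A B c x y' l + h x - g y') '' Y) := by
    intro x _ l
    obtain ⟨y, hyY, _, hsup⟩ := exists_max_image hYne hYcpt (hlagcont x l)
    exact ⟨y, hyY, hsup⟩
  -- abbreviations
  set P : E n → ℝ :=
    fun x => sSup ((fun y => f x y + h x - g y) '' {y ∈ Y | A x + B y = c}) with hPdef
  set R : E p → ℝ :=
    fun l => sInf ((fun x =>
      sSup ((fun y => lag f A B c x y l + h x - g y) '' Y)) '' X) with hRdef
  -- global lower bound
  set M : ℝ := sInf ((fun q : E n × E m => f q.1 q.2 + h q.1 - g q.2) '' (X ×ˢ Y)) with hMdef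
  have hMcont : Continuous (fun q : E n × E m => f q.1 q.2 + h q.1 - g q.2) :=
    (hfc.add (hhcont.comp continuous_fst)).sub (hgcont.comp continuous_snd)
  have hM : ∀ x ∈ X, ∀ y ∈ Y, M ≤ f x y + h x - g y := by
    intro x hx y hy
    exact csInf_le ((hXcpt.prod hYcpt).image hMcont).bddBelow
      ⟨(x, y), Set.mem_prod.mpr ⟨hx, hy⟩, rfl⟩
  have hMP : ∀ x ∈ X, M ≤ P x := by
    intro x hx
    obtain ⟨y, hyY, hyc, hsup⟩ := key3 x hx
    calc M ≤ f x y + h x - g y := hM x hx y hyY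
    _ = P x := hsup
  -- weak duality pointwise
  have hPD : ∀ x ∈ X, ∀ l : E p,
      P x ≤ sSup ((fun y => lag f A B c x y l + h x - g y) '' Y) := by
    intro x hx l
    obtain ⟨y, hyY, hyc, hsup⟩ := key3 x hx
    have hlageq : lag f A B c x y l = f x y := by
      simp [lag, hyc]
    calc P x = f x y + h x - g y := hsup.symm
    _ = lag f A B c x y l + h x - g y := by rw [hlageq]
    _ ≤ sSup ((fun y => lag f A B c x y l + h x - g y) '' Y) :=
        le_csSup (hYcpt.image (hlagcont x l)).bddAbove (Set.mem_image_of_mem _ hyY)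
  have hDM : ∀ (l : E p), ∀ x ∈ X,
      M ≤ sSup ((fun y => lag f A B c x y l + h x - g y) '' Y) :=
    fun l x hx => (hMP x hx).trans (hPD x hx l)
  have hRge : ∀ l : E p, M ≤ R l := by
    intro l
    apply le_csInf (hXne.image _)
    rintro b ⟨x, hx, rfl⟩
    exact hDM l x hx
  have part2 : BddBelow (Set.range R) := by
    refine ⟨M, ?_⟩
    rintro r ⟨l, rfl⟩
    exact hRge l
  have hPbdd : BddBelow (P '' X) := by
    refine ⟨M, ?_⟩
    rintro b ⟨x, hx, rfl⟩
    exact hMP x hx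
  have hPne : (P '' X).Nonempty := hXne.image P
  -- strong duality pointwise
  have hstrong : ∀ x ∈ X, ∀ ε : ℝ, 0 < ε → ∃ l : E p,
      sSup ((fun y => lag f A B c x y l + h x - g y) '' Y) ≤ P x + ε := by
    intro x hx ε hε
    have hconcφ : ConcaveOn ℝ Y (fun y => f x y + h x - g y) := by
      have h1 : ConcaveOn ℝ Y (fun y => f x y + h x) :=
        (hconc x hx).add_const (h x)
      exact h1.sub (hgcvx.subset (Set.subset_univ Y) hYcvx)
    have hfeas' : ∃ y ∈ Y, B y + (A x - c) = 0 := by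
      obtain ⟨y, hy, hyc⟩ := hfeas x hx
      refine ⟨y, hy, ?_⟩
      rw [show B y + (A x - c) = (A x + B y) - c by abel, hyc, sub_self]
    have hv : ∀ y ∈ Y, B y + (A x - c) = 0 → f x y + h x - g y ≤ P x := by
      intro y hy hyc
      have hyc' : A x + B y = c := by
        have := hyc
        rw [show B y + (A x - c) = (A x + B y) - c by abel, sub_eq_zero] at this
        exact this
      exact le_csSup ((hFcpt x).image (hφcont x)).bddAbove
        (Set.mem_image_of_mem _ ⟨hy, hyc'⟩)
    obtain ⟨l, hl⟩ := dual_le_of_sep hYne hYcvx hYcpt (hφcont x) hconcφ B (A x - c)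
      hfeas' hv hε
    refine ⟨l, csSup_le (hYne.image _) ?_⟩
    rintro b ⟨y, hy, rfl⟩
    show lag f A B c x y l + h x - g y ≤ P x + ε
    have heq : lag f A B c x y l + h x - g y
        = (f x y + h x - g y) - ⟪l, B y + (A x - c)⟫ := by
      simp only [lag]
      rw [show B y + (A x - c) = A x + B y - c by abel]
      ring
    rw [heq]
    exact hl y hy
  -- the main equality
  have heq : sInf (P '' X) = sInf (Set.range R) := by
    apply le_antisymm
    · apply le_csInf (Set.range_nonempty R)
      rintro r ⟨l, rfl⟩
      apply le_csInf (hXne.image _)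
      rintro b ⟨x, hx, rfl⟩
      exact (csInf_le hPbdd (Set.mem_image_of_mem P hx)).trans (hPD x hx l)
    · apply le_of_forall_pos_le_add
      intro ε hε
      have hlt : sInf (P '' X) < sInf (P '' X) + ε / 2 := by linarith
      rw [csInf_lt_iff hPbdd hPne] at hlt
      obtain ⟨b, ⟨x₀, hx₀, rfl⟩, hblt⟩ := hlt
      obtain ⟨l, hl⟩ := hstrong x₀ hx₀ (ε / 2) (by linarith)
      calc sInf (Set.range R) ≤ R l := csInf_le part2 (Set.mem_range_self l)
      _ ≤ sSup ((fun y => lag f A B c x₀ y l + h x₀ - g y) '' Y) := by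
          apply csInf_le ⟨M, ?_⟩ (Set.mem_image_of_mem _ hx₀)
          rintro b ⟨x, hx, rfl⟩
          exact hDM l x hx
      _ ≤ P x₀ + ε / 2 := hl
      _ ≤ sInf (P '' X) + ε := by linarith
  exact ⟨heq, part2, key3, key4⟩
end
end

section
/- Assume (Lip) and that for every x ∈ ℝⁿ the function y ↦ f(x,y) is μ-strongly concave on ℝᵐ for some μ > 0. Fix β > 0, x ∈ ℝⁿ, λ ∈ ℝᵖ, and let y*(x,λ) be the unique maximizer over Y of y ↦ L(x,y,λ) − g(y). Then for every y ∈ Y, ‖y − y*(x,λ)‖ ≤ η · ‖y − Prox^β_{g,Y}(y + (1/β)∇_yL(x,y,λ))‖, where η := (2β+μ)(β+L)/(μβ). -/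
open scoped RealInnerProductSpace

noncomputable section

section AuxEB
open Filter Topology Set

lemma slope_tendsto {d : ℕ} {φ : E d → ℝ} {G a : E d} (h : HasGradientAt φ G a) (v : E d) :
    Tendsto (fun t : ℝ => (φ (a + t • v) - φ a) / t) (𝓝[>] (0:ℝ)) (𝓝 ⟪G, v⟫) := by
  have hline : HasDerivAt (fun t : ℝ => a + t • v) v 0 := by
    simpa using ((hasDerivAt_id (0:ℝ)).smul_const v).const_add a
  have hcomp : HasDerivAt (fun t : ℝ => φ (a + t • v)) ⟪G, v⟫ 0 := by
    have hfd : HasFDerivAt φ ((InnerProductSpace.toDual ℝ (E d)) G) (a + (0:ℝ) • v) := by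
      simpa using h.hasFDerivAt
    have := hfd.comp_hasDerivAt 0 hline
    simpa [InnerProductSpace.toDual_apply_apply, Function.comp_def] using this
  have h2 := hasDerivAt_iff_tendsto_slope.mp hcomp
  have h3 : Tendsto (slope (fun t : ℝ => φ (a + t • v)) 0) (𝓝[>] 0) (𝓝 ⟪G, v⟫) :=
    h2.mono_left (nhdsWithin_mono _ (fun t ht => ne_of_gt ht))
  refine h3.congr (fun t => ?_)
  simp [slope_def_field]

lemma Ioc_mem_pos : Ioc (0:ℝ) 1 ∈ 𝓝[>] (0:ℝ) :=
  Ioc_mem_nhdsGT_of_mem ⟨le_refl 0, zero_lt_one⟩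

lemma inner_ge_of_slope_ge {d : ℕ} {φ : E d → ℝ} {G a : E d} {v : E d} {K C : ℝ}
    (h : HasGradientAt φ G a)
    (hb : ∀ t ∈ Ioc (0:ℝ) 1, K - t * C ≤ (φ (a + t • v) - φ a) / t) :
    K ≤ ⟪G, v⟫ := by
  have h1 := slope_tendsto h v
  have h2 : Tendsto (fun t : ℝ => K - t * C) (𝓝[>] (0:ℝ)) (𝓝 K) := by
    have : Tendsto (fun t : ℝ => K - t * C) (𝓝 (0:ℝ)) (𝓝 (K - 0 * C)) :=
      (tendsto_const_nhds.sub ((continuous_id.mul continuous_const).tendsto 0))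
    simpa using this.mono_left nhdsWithin_le_nhds
  exact le_of_tendsto_of_tendsto h2 h1 (by
    filter_upwards [Ioc_mem_pos] with t ht using hb t ht)

lemma inner_le_of_slope_le {d : ℕ} {φ : E d → ℝ} {G a : E d} {v : E d} {K C : ℝ}
    (h : HasGradientAt φ G a)
    (hb : ∀ t ∈ Ioc (0:ℝ) 1, (φ (a + t • v) - φ a) / t ≤ K + t * C) :
    ⟪G, v⟫ ≤ K := by
  have h1 := slope_tendsto h v
  have h2 : Tendsto (fun t : ℝ => K + t * C) (𝓝[>] (0:ℝ)) (𝓝 K) := by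
    have : Tendsto (fun t : ℝ => K + t * C) (𝓝 (0:ℝ)) (𝓝 (K + 0 * C)) :=
      (tendsto_const_nhds.add ((continuous_id.mul continuous_const).tendsto 0))
    simpa using this.mono_left nhdsWithin_le_nhds
  exact le_of_tendsto_of_tendsto h1 h2 (by
    filter_upwards [Ioc_mem_pos] with t ht using hb t ht)

lemma nonneg_of_forall_Ioc {C D : ℝ} (h : ∀ t ∈ Ioc (0:ℝ) 1, 0 ≤ C + t * D) : 0 ≤ C := by
  have h2 : Tendsto (fun t : ℝ => C + t * D) (𝓝[>] (0:ℝ)) (𝓝 C) := by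
    have : Tendsto (fun t : ℝ => C + t * D) (𝓝 (0:ℝ)) (𝓝 (C + 0 * D)) :=
      (tendsto_const_nhds.add ((continuous_id.mul continuous_const).tendsto 0))
    simpa using this.mono_left nhdsWithin_le_nhds
  exact ge_of_tendsto h2 (by filter_upwards [Ioc_mem_pos] with t ht using h t ht)


lemma diff_fx {n m : ℕ} {f : E n → E m → ℝ} (hf : ContDiff ℝ 1 (Function.uncurry f))
    (x : E n) (z : E m) : DifferentiableAt ℝ (f x) z := by
  have h := (hf.differentiable one_ne_zero) (x, z)
  exact h.comp z ((differentiableAt_const x).prodMk differentiableAt_id)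

lemma grad_lag_y {n m p : ℕ} (f : E n → E m → ℝ) (hf : ContDiff ℝ 1 (Function.uncurry f))
    (A : E n →L[ℝ] E p) (B : E m →L[ℝ] E p) (c : E p) (x : E n) (l : E p) (z : E m) :
    HasGradientAt (fun y' => lag f A B c x y' l)
      (gradient (f x) z - (ContinuousLinearMap.adjoint B) l) z := by
  have h1 : HasFDerivAt (f x) (InnerProductSpace.toDual ℝ (E m) (gradient (f x) z)) z :=
    (diff_fx hf x z).hasGradientAt.hasFDerivAt
  have haff : HasFDerivAt (fun y' : E m => A x + B y' - c) (B : E m →L[ℝ] E p) z := by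
    simpa using ((B.hasFDerivAt (x := z)).const_add (A x)).sub_const c
  have h2 : HasFDerivAt (fun y' : E m => ⟪l, A x + B y' - c⟫)
      ((innerSL ℝ l).comp (B : E m →L[ℝ] E p)) z :=
    ((innerSL ℝ l).hasFDerivAt).comp z haff
  have heq : (innerSL ℝ l).comp (B : E m →L[ℝ] E p)
      = InnerProductSpace.toDual ℝ (E m) ((ContinuousLinearMap.adjoint B) l) := by
    ext w
    simp [InnerProductSpace.toDual_apply_apply, ContinuousLinearMap.adjoint_inner_left]
  rw [heq] at h2
  have h3 := h1.sub h2
  rw [← map_sub] at h3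
  exact hasGradientAt_iff_hasFDerivAt.mpr h3

end AuxEB

set_option maxHeartbeats 1000000 in
/-- Lemma 2.2, global error bound: under (Lip) and `μ`-strong concavity
of `f(x,·)`, the distance from `y ∈ Y` to the unique maximizer `y*(x,λ)` of
`L(x,·,λ) − g(·)` over `Y` is bounded by `η` times the prox-gradient residual,
where `η = (2β+μ)(β+L)/(μβ)`. -/
theorem error_bound_strongly_concave
    {n m p : ℕ} (Y : Set (E m))
    (hYne : Y.Nonempty) (hYcvx : Convex ℝ Y) (hYcpt : IsCompact Y)
    (f : E n → E m → ℝ) (hf : ContDiff ℝ 1 (Function.uncurry f))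
    (g : E m → ℝ) (hgcvx : ConvexOn ℝ Set.univ g) (hgcont : Continuous g)
    (A : E n →L[ℝ] E p) (B : E m →L[ℝ] E p) (c : E p)
    (L μ : ℝ) (hL : 0 < L) (hμ : 0 < μ)
    (hlip : LipGrad f L)
    (hsc : ∀ x, StrongConcaveOn Set.univ μ (f x))
    (β : ℝ) (hβ : 0 < β)
    (x : E n) (l : E p)
    (ystar : E m) (hystarY : ystar ∈ Y)
    (hystar : ∀ z ∈ Y, lag f A B c x z l - g z ≤ lag f A B c x ystar l - g ystar)
    (y : E m) (hy : y ∈ Y)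
    (w : E m) (hw : IsProx g Y β (y + β⁻¹ • gradyL f A B c x y l) w) :
    ‖y - ystar‖ ≤ (2 * β + μ) * (β + L) / (μ * β) * ‖y - w‖ := by
  obtain ⟨hwY, hwmin⟩ := hw
  have hlip' := hlip.2.2.1
  have hgradeq : gradyL f A B c x y l
      = gradient (f x) y - (ContinuousLinearMap.adjoint B) l :=
    (grad_lag_y f hf A B c x l y).gradient
  rw [hgradeq] at hwmin
  set Bl := (ContinuousLinearMap.adjoint B) l with hBl
  set Fy := gradient (f x) y with hFy
  set Fs := gradient (f x) ystar with hFs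
  set Gy := Fy - Bl with hGy
  set Gs := Fs - Bl with hGs
  set v := y + β⁻¹ • Gy with hv
  set a := ‖y - ystar‖ with ha
  set b := ‖y - w‖ with hb
  have ha0 : 0 ≤ a := norm_nonneg _
  have hb0 : 0 ≤ b := norm_nonneg _
  set φ := fun y' => lag f A B c x y' l with hφ
  have hGyg : HasGradientAt φ Gy y := grad_lag_y f hf A B c x l y
  have hGsg : HasGradientAt φ Gs ystar := grad_lag_y f hf A B c x l ystar
  -- Step 1: prox optimality at ystar
  have P1 : 0 ≤ (g ystar - g w) + β * ⟪w - v, ystar - w⟫ := by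
    refine nonneg_of_forall_Ioc (D := β / 2 * (‖ystar - w‖ ^ 2)) (fun t ht => ?_)
    have ht0 := ht.1
    have ht1 := ht.2
    have heq : (1 - t) • w + t • ystar = w + t • (ystar - w) := by module
    have hzt : w + t • (ystar - w) ∈ Y := by
      rw [← heq]; exact hYcvx hwY hystarY (by linarith) ht0.le (by ring)
    have hgc : g (w + t • (ystar - w)) ≤ (1 - t) * g w + t * g ystar := by
      rw [← heq]
      simpa using hgcvx.2 (Set.mem_univ w) (Set.mem_univ ystar)
        (by linarith : (0:ℝ) ≤ 1 - t) ht0.le (by ring)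
    have hprox := hwmin _ hzt
    have hnorm : ‖(w + t • (ystar - w)) - v‖ ^ 2
        = ‖w - v‖ ^ 2 + 2 * t * ⟪w - v, ystar - w⟫ + t ^ 2 * ‖ystar - w‖ ^ 2 := by
      have h1 : (w + t • (ystar - w)) - v = (w - v) + t • (ystar - w) := by module
      rw [h1, norm_add_sq_real, real_inner_smul_right, norm_smul]
      simp [mul_pow, abs_of_nonneg ht0.le]
      ring
    rw [hnorm] at hprox
    have hkey : t * 0 ≤ t * ((g ystar - g w) + β * ⟪w - v, ystar - w⟫
        + t * (β / 2 * (‖ystar - w‖ ^ 2))) := by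
      have expand : g w + β / 2 * ‖w - v‖ ^ 2 +
          t * ((g ystar - g w) + β * ⟪w - v, ystar - w⟫ + t * (β / 2 * (‖ystar - w‖ ^ 2)))
          = (1 - t) * g w + t * g ystar + β / 2 *
            (‖w - v‖ ^ 2 + 2 * t * ⟪w - v, ystar - w⟫ + t ^ 2 * ‖ystar - w‖ ^ 2) := by ring
      linarith [hprox, hgc, expand.le, expand.ge]
    exact le_of_mul_le_mul_left hkey ht0
  -- Step 2: maximizer optimality at w
  have P2 : ⟪Gs, w - ystar⟫ ≤ g w - g ystar := by
    have := inner_le_of_slope_le (C := 0) hGsg (v := w - ystar) (K := g w - g ystar) ?_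
    · simpa using this
    intro t ht
    have ht0 := ht.1
    have ht1 := ht.2
    have heq : (1 - t) • ystar + t • w = ystar + t • (w - ystar) := by module
    have hzt : ystar + t • (w - ystar) ∈ Y := by
      rw [← heq]; exact hYcvx hystarY hwY (by linarith) ht0.le (by ring)
    have hgc : g (ystar + t • (w - ystar)) ≤ (1 - t) * g ystar + t * g w := by
      rw [← heq]
      simpa using hgcvx.2 (Set.mem_univ ystar) (Set.mem_univ w)
        (by linarith : (0:ℝ) ≤ 1 - t) ht0.le (by ring)
    have hopt := hystar _ hzt
    rw [div_le_iff₀ ht0]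
    have hφle : φ (ystar + t • (w - ystar)) - φ ystar
        ≤ g (ystar + t • (w - ystar)) - g ystar := by
      simp only [hφ]; linarith [hopt]
    have expand : (g w - g ystar + t * 0) * t
        = ((1 - t) * g ystar + t * g w) - g ystar := by ring
    linarith [hφle, hgc, expand.le, expand.ge]
  -- Step 3: strong monotonicity of gradient of f x
  have M : μ * a ^ 2 ≤ ⟪Fy - Fs, ystar - y⟫ := by
    have key1 : f x ystar - f x y + μ / 2 * (a ^ 2) ≤ ⟪Fy, ystar - y⟫ := by
      refine inner_ge_of_slope_ge (C := μ / 2 * (a ^ 2)) ((diff_fx hf x y).hasGradientAt)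
        (fun t ht => ?_)
      have ht0 := ht.1
      have ht1 := ht.2
      have heq : (1 - t) • y + t • ystar = y + t • (ystar - y) := by module
      have hsco := (hsc x).2 (Set.mem_univ y) (Set.mem_univ ystar)
        (by linarith : (0:ℝ) ≤ 1 - t) ht0.le (by ring)
      rw [heq] at hsco
      simp only [smul_eq_mul] at hsco
      rw [← ha] at hsco
      rw [le_div_iff₀ ht0]
      have expand : (f x ystar - f x y + μ / 2 * (a ^ 2) - t * (μ / 2 * (a ^ 2))) * t
          = (1 - t) * f x y + t * f x ystar + (1 - t) * t * (μ / 2 * a ^ 2) - f x y := by ring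
      linarith [hsco, expand.le, expand.ge]
    have key2 : f x y - f x ystar + μ / 2 * (a ^ 2) ≤ ⟪Fs, y - ystar⟫ := by
      refine inner_ge_of_slope_ge (C := μ / 2 * (a ^ 2)) ((diff_fx hf x ystar).hasGradientAt)
        (fun t ht => ?_)
      have ht0 := ht.1
      have ht1 := ht.2
      have heq : (1 - t) • ystar + t • y = ystar + t • (y - ystar) := by module
      have hsco := (hsc x).2 (Set.mem_univ ystar) (Set.mem_univ y)
        (by linarith : (0:ℝ) ≤ 1 - t) ht0.le (by ring)
      rw [heq] at hsco
      simp only [smul_eq_mul] at hsco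
      have hns : ‖ystar - y‖ = a := by rw [ha, norm_sub_rev]
      rw [hns] at hsco
      rw [le_div_iff₀ ht0]
      have expand : (f x y - f x ystar + μ / 2 * (a ^ 2) - t * (μ / 2 * (a ^ 2))) * t
          = (1 - t) * f x ystar + t * f x y + (1 - t) * t * (μ / 2 * a ^ 2) - f x ystar := by ring
      linarith [hsco, expand.le, expand.ge]
    have hsplit : ⟪Fy - Fs, ystar - y⟫ = ⟪Fy, ystar - y⟫ + ⟪Fs, y - ystar⟫ := by
      rw [inner_sub_left]
      have h9 : (⟪Fs, y - ystar⟫ : ℝ) = -⟪Fs, ystar - y⟫ := by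
        rw [← inner_neg_right]; congr 1; abel
      rw [h9]; ring
    linarith [key1, key2, hsplit.le, hsplit.ge]
  -- Step 4: Lipschitz
  have hlipb : ‖Fs - Fy‖ ≤ L * a := by
    have h10 := hlip' x ystar y
    rwa [ha, norm_sub_rev y ystar]
  -- Step 5: combine
  have key : 0 ≤ ⟪Gs, ystar - w⟫ + β * ⟪w - v, ystar - w⟫ := by
    have h11 : (⟪Gs, ystar - w⟫ : ℝ) = -⟪Gs, w - ystar⟫ := by
      rw [← inner_neg_right]; congr 1; abel
    linarith [P1, P2, h11.le, h11.ge]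
  have hsub : w - v = (w - y) - β⁻¹ • Gy := by rw [hv]; module
  have h1 : β * ⟪w - v, ystar - w⟫ = β * ⟪w - y, ystar - w⟫ - ⟪Gy, ystar - w⟫ := by
    rw [hsub, inner_sub_left, real_inner_smul_left, mul_sub]
    congr 1
    rw [← mul_assoc, mul_inv_cancel₀ hβ.ne', one_mul]
  have h2 : ⟪Gs, ystar - w⟫ - ⟪Gy, ystar - w⟫ = ⟪Fs - Fy, ystar - w⟫ := by
    rw [← inner_sub_left]
    congr 1
    rw [hGs, hGy]; module
  have h3 : (⟪Fs - Fy, ystar - w⟫ : ℝ) = ⟪Fs - Fy, ystar - y⟫ + ⟪Fs - Fy, y - w⟫ := by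
    rw [← inner_add_right]; congr 1; module
  have h4 : (⟪w - y, ystar - w⟫ : ℝ) = ⟪w - y, ystar - y⟫ - ⟪w - y, w - y⟫ := by
    rw [← inner_sub_right]; congr 1; module
  have h5 : (⟪w - y, w - y⟫ : ℝ) = b ^ 2 := by
    rw [real_inner_self_eq_norm_sq, hb, norm_sub_rev]
  have b1 : (⟪Fs - Fy, ystar - y⟫ : ℝ) = -⟪Fy - Fs, ystar - y⟫ := by
    rw [← inner_neg_left]; congr 1; abel
  have b2 : (⟪Fs - Fy, y - w⟫ : ℝ) ≤ L * a * b := by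
    calc (⟪Fs - Fy, y - w⟫ : ℝ) ≤ ‖Fs - Fy‖ * ‖y - w‖ := real_inner_le_norm _ _
    _ ≤ L * a * b := mul_le_mul_of_nonneg_right hlipb hb0
  have b3 : (⟪w - y, ystar - y⟫ : ℝ) ≤ b * a := by
    calc (⟪w - y, ystar - y⟫ : ℝ) ≤ ‖w - y‖ * ‖ystar - y‖ := real_inner_le_norm _ _
    _ = b * a := by rw [ha, hb, norm_sub_rev w y, norm_sub_rev ystar y]
  have hβb3 := mul_le_mul_of_nonneg_left b3 hβ.le
  have hβh4 := congrArg (fun r => β * r) h4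
  have hβh5 := congrArg (fun r => β * r) h5
  -- main quadratic inequality
  have main : μ * a ^ 2 ≤ (L + β) * a * b := by
    have hbsq : 0 ≤ β * b ^ 2 := by positivity
    linarith [key, h1, h2, h3, b1.le, b1.ge, b2, M, hβb3, hβh4.le, hβh4.ge, hβh5.le, hβh5.ge, hbsq]
  -- final algebra
  rcases eq_or_lt_of_le ha0 with hz | hap
  · rw [← hz]
    positivity
  · have hstep : μ * a ≤ (L + β) * b := by
      have h12 : μ * a * a ≤ (L + β) * b * a := by nlinarith [main]
      exact (mul_le_mul_iff_of_pos_right hap).mp h12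
    rw [div_mul_eq_mul_div, le_div_iff₀ (by positivity)]
    nlinarith [mul_le_mul_of_nonneg_right hstep hβ.le, mul_nonneg (mul_nonneg hL.le hb0) hμ.le,
      mul_nonneg hb0 hμ.le, mul_nonneg (mul_nonneg hβ.le hb0) hμ.le,
      mul_nonneg (mul_nonneg hL.le hb0) hβ.le]
end
end

section
/- Assume (Lip). Let β > 0, let x_k ∈ ℝⁿ, y_k ∈ Y, λ_k ∈ ℝᵖ, and set y_{k+1} := Prox^β_{g,Y}(y_k + (1/β)∇_yL(x_k,y_k,λ_k)). Then there exists a subgradient ξ_{k+1} ∈ ∂g(y_{k+1}) such that for all x_{k+1} ∈ ℝⁿ and λ_{k+1} ∈ ℝᵖ: L(x_{k+1},y_{k+1},λ_{k+1}) − L(x_k,y_k,λ_k) ≥ (β − L/2)·‖y_{k+1}−y_k‖² − (L/2)·‖x_{k+1}−x_k‖² + ⟨∇_λL(x_{k+1},y_{k+1},λ_k), λ_{k+1}−λ_k⟩ + ⟨ξ_{k+1}, y_{k+1}−y_k⟩ + ⟨∇_xL(x_k,y_{k+1},λ_k), x_{k+1}−x_k⟩, where ∇_λL(x,y,λ) =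 −(Ax+By−c). -/
open scoped RealInnerProductSpace

noncomputable section

lemma aux_le_of_small {a b C : ℝ} (hC : 0 ≤ C)
    (h : ∀ t : ℝ, 0 < t → t ≤ 1 → a ≤ b + t * C) : a ≤ b := by
  by_contra hab
  push_neg at hab
  set t : ℝ := min 1 ((a - b) / (2 * C + 1)) with ht
  have ht0 : 0 < t := lt_min one_pos (div_pos (by linarith) (by positivity))
  have ht1 : t ≤ 1 := min_le_left _ _
  have h2 : t * C ≤ ((a - b) / (2 * C + 1)) * C :=
    mul_le_mul_of_nonneg_right (min_le_right _ _) hC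
  have h3 : ((a - b) / (2 * C + 1)) * C < a - b := by
    rw [div_mul_eq_mul_div, div_lt_iff₀ (by positivity)]
    nlinarith
  have := h t ht0 ht1
  linarith

lemma descent_lower {d : ℕ} {h : E d → ℝ} {h' : E d → E d}
    (hd : ∀ x, HasGradientAt h (h' x) x) {L : ℝ}
    (hlip : ∀ a b, ‖h' a - h' b‖ ≤ L * ‖a - b‖) (a b : E d) :
    ⟪h' a, b - a⟫ - L / 2 * ‖b - a‖ ^ 2 ≤ h b - h a := by
  rcases eq_or_ne a b with rfl | hab
  · simp
  have hL0 : 0 ≤ L := by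
    have h1 := hlip a b
    have h2 : (0:ℝ) < ‖a - b‖ := by
      rw [norm_pos_iff]; exact sub_ne_zero.mpr hab
    nlinarith [norm_nonneg (h' a - h' b)]
  set w := b - a with hw
  set γ : ℝ → E d := fun t => a + t • w with hγ
  have hγd : ∀ t : ℝ, HasDerivAt γ w t := by
    intro t
    simpa [hγ] using ((hasDerivAt_id t).smul_const w).const_add a
  have hFd : ∀ t : ℝ, HasDerivAt (fun s => h (γ s)) ⟪h' (γ t), w⟫ t := by
    intro t
    have := ((hd (γ t)).hasFDerivAt).comp_hasDerivAt t (hγd t)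
    simpa [InnerProductSpace.toDual_apply_apply, Function.comp_def] using this
  set G : ℝ → ℝ := fun t => h (γ t) - t * ⟪h' a, w⟫ + L * t ^ 2 / 2 * ‖w‖ ^ 2 with hG
  have hGd : ∀ t : ℝ, HasDerivAt G (⟪h' (γ t), w⟫ - ⟪h' a, w⟫ + L * t * ‖w‖ ^ 2) t := by
    intro t
    have h1 : HasDerivAt (fun s : ℝ => s * ⟪h' a, w⟫) ⟪h' a, w⟫ t := by
      simpa using (hasDerivAt_id t).mul_const ⟪h' a, w⟫
    have h2 : HasDerivAt (fun s : ℝ => L * s ^ 2 / 2 * ‖w‖ ^ 2) (L * t * ‖w‖ ^ 2) t := by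
      have h3 := (((hasDerivAt_pow 2 t).const_mul L).div_const 2).mul_const (‖w‖ ^ 2)
      refine h3.congr_deriv ?_
      rw [show (2:ℕ) - 1 = 1 from rfl]
      push_cast
      ring
    exact ((hFd t).sub h1).add h2
  have hmono : MonotoneOn G (Set.Icc (0:ℝ) 1) := by
    apply monotoneOn_of_deriv_nonneg (convex_Icc 0 1)
    · exact fun t _ => ((hGd t).differentiableAt.continuousAt).continuousWithinAt
    · exact fun t _ => ((hGd t).differentiableAt).differentiableWithinAt
    · intro t ht
      rw [interior_Icc] at ht
      rw [(hGd t).deriv]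
      have h1 : |⟪h' (γ t) - h' a, w⟫| ≤ ‖h' (γ t) - h' a‖ * ‖w‖ := abs_real_inner_le_norm _ _
      have h2 : ‖h' (γ t) - h' a‖ ≤ L * (t * ‖w‖) := by
        have := hlip (γ t) a
        have hγa : γ t - a = t • w := by simp [hγ]
        rw [hγa] at this
        simpa [norm_smul, abs_of_pos ht.1] using this
      have h3 : ⟪h' (γ t) - h' a, w⟫ ≥ -(L * t * ‖w‖ ^ 2) := by
        have := neg_abs_le ⟪h' (γ t) - h' a, w⟫
        nlinarith [norm_nonneg w, norm_nonneg (h' (γ t) - h' a), mul_le_mul_of_nonneg_right h2 (norm_nonneg w)]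
      have h4 : ⟪h' (γ t) - h' a, w⟫ = ⟪h' (γ t), w⟫ - ⟪h' a, w⟫ := inner_sub_left _ _ _
      linarith
  have hkey := hmono (Set.mem_Icc.mpr ⟨le_refl 0, zero_le_one⟩) (Set.mem_Icc.mpr ⟨zero_le_one, le_refl 1⟩) zero_le_one
  have hG0 : G 0 = h a := by simp [hG, hγ]
  have hG1 : G 1 = h b - ⟪h' a, w⟫ + L / 2 * ‖w‖ ^ 2 := by
    have : γ 1 = b := by simp [hγ, hw]
    simp [hG, this]
  rw [hG0, hG1] at hkey
  linarith

lemma aux_le_of_small' {a b C : ℝ} (hC : C < 0)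
    (h : ∀ ε : ℝ, 0 < ε → a + ε * C < b) : a ≤ b := by
  by_contra hab
  push_neg at hab
  have := h ((b - a) / (2 * C)) (div_pos_of_neg_of_neg (by linarith) (by linarith))
  have h2 : (b - a) / (2 * C) * C = (b - a) / 2 := by
    have hC0 : C ≠ 0 := ne_of_lt hC
    field_simp
  rw [h2] at this
  linarith

lemma exists_subgrad_dir {d : ℕ} {G : E d → ℝ}
    (hGcvx : ConvexOn ℝ Set.univ G) (hGcont : Continuous G) (x0 u : E d)
    (hdir : ∀ s : ℝ, 0 < s → G x0 ≤ G (x0 + s • u)) :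
    ∃ ξ : E d, (∀ z, G x0 + ⟪ξ, z - x0⟫ ≤ G z) ∧ 0 ≤ ⟪ξ, u⟫ := by
  classical
  set S : Set (E d × ℝ) := {q | G q.1 < q.2} with hS
  have hSopen : IsOpen S := isOpen_lt (hGcont.comp continuous_fst) continuous_snd
  have hScvx : Convex ℝ S := by
    intro q1 h1 q2 h2 a b ha hb hab
    have hcv := hGcvx.2 (Set.mem_univ q1.1) (Set.mem_univ q2.1) ha hb hab
    simp only [hS, Set.mem_setOf_eq] at h1 h2 ⊢
    have h3 : a * G q1.1 + b * G q2.1 < a * q1.2 + b * q2.2 := by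
      rcases eq_or_lt_of_le ha with rfl | ha'
      · simp only [zero_add] at hab; subst hab; simpa using h2
      · rcases eq_or_lt_of_le hb with rfl | hb'
        · nlinarith
        · nlinarith
    calc G (a • q1 + b • q2).1 ≤ a * G q1.1 + b * G q2.1 := by
          simpa [smul_eq_mul] using hcv
      _ < (a • q1 + b • q2).2 := h3
  set T : Set (E d × ℝ) := (fun sr : ℝ × ℝ => (x0 + sr.1 • u, sr.2)) ''
      {sr | 0 ≤ sr.1 ∧ sr.2 ≤ G x0} with hT
  have hTcvx : Convex ℝ T := by
    rintro _ ⟨⟨s1, r1⟩, ⟨hs1, hr1⟩, rfl⟩ _ ⟨⟨s2, r2⟩, ⟨hs2, hr2⟩, rfl⟩ a b ha hb hab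
    dsimp only at hs1 hr1 hs2 hr2
    have hb1 : b = 1 - a := by linarith
    subst hb1
    refine ⟨(a * s1 + (1 - a) * s2, a * r1 + (1 - a) * r2),
      ⟨by positivity, by show a * r1 + (1 - a) * r2 ≤ G x0; nlinarith [mul_le_mul_of_nonneg_left hr1 ha, mul_le_mul_of_nonneg_left hr2 hb]⟩, ?_⟩
    simp only [Prod.smul_mk, Prod.mk_add_mk, smul_eq_mul, Prod.ext_iff]
    constructor
    · show x0 + (a * s1 + (1 - a) * s2) • u = a • (x0 + s1 • u) + (1 - a) • (x0 + s2 • u)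
      module
    · dsimp only
  have hdisj : Disjoint S T := by
    rw [Set.disjoint_left]
    rintro q hqS ⟨⟨s, r⟩, ⟨hs, hr⟩, rfl⟩
    simp only [hS, Set.mem_setOf_eq] at hqS
    rcases eq_or_lt_of_le hs with rfl | hs'
    · simp at hqS; linarith
    · have := hdir s hs'
      linarith
  obtain ⟨φ, α, hSφ, hTφ⟩ := geometric_hahn_banach_open hScvx hSopen hTcvx hdisj
  set c : ℝ := φ ((0 : E d), (1 : ℝ)) with hc_def
  have hφ : ∀ (z : E d) (t : ℝ), φ (z, t) = φ (z, 0) + t * c := by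
    intro z t
    have h1 : ((z, t) : E d × ℝ) = (z, (0:ℝ)) + t • ((0 : E d), (1:ℝ)) := by
      simp [Prod.ext_iff]
    rw [h1, map_add, map_smul, smul_eq_mul]
  have hqT : α ≤ φ (x0, G x0) := hTφ _ ⟨((0:ℝ), G x0), ⟨le_refl 0, le_refl _⟩, by simp⟩
  have hSmem : ∀ (z : E d) (ε : ℝ), 0 < ε → φ (z, 0) + (G z + ε) * c < α := by
    intro z ε hε
    have : ((z, G z + ε) : E d × ℝ) ∈ S := by
      simp only [hS, Set.mem_setOf_eq]
      show G z < G z + ε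
      linarith
    have := hSφ _ this
    rwa [hφ] at this
  have hcneg : c < 0 := by
    have h1 := hSmem x0 1 one_pos
    rw [hφ] at hqT
    nlinarith
  have hkey : ∀ z : E d, φ (z, 0) + G z * c ≤ φ (x0, 0) + G x0 * c := by
    intro z
    apply aux_le_of_small' hcneg
    intro ε hε
    have h1 := hSmem z ε hε
    rw [hφ] at hqT
    nlinarith
  have hαle : φ (x0, 0) + G x0 * c ≤ α := by
    apply aux_le_of_small' hcneg
    intro ε hε
    have h1 := hSmem x0 ε hε
    nlinarith
  have hdirφ : φ (x0, 0) ≤ φ (x0 + u, 0) := by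
    have h1 : α ≤ φ (x0 + u, G x0) := hTφ _ ⟨((1:ℝ), G x0), ⟨zero_le_one, le_refl _⟩, by simp⟩
    rw [hφ] at h1
    linarith
  have hcpos : 0 < -c := neg_pos.mpr hcneg
  set ξ : E d := (InnerProductSpace.toDual ℝ (E d)).symm
      ((-c)⁻¹ • (φ.comp (ContinuousLinearMap.inl ℝ (E d) ℝ))) with hξdef
  have hξ : ∀ w : E d, ⟪ξ, w⟫ = (-c)⁻¹ * φ (w, 0) := by
    intro w
    rw [hξdef, InnerProductSpace.toDual_symm_apply]
    simp [ContinuousLinearMap.smul_apply, ContinuousLinearMap.comp_apply,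
      ContinuousLinearMap.inl_apply, smul_eq_mul]
  refine ⟨ξ, ?_, ?_⟩
  · intro z
    have h1 : φ (z - x0, 0) = φ (z, 0) - φ (x0, 0) := by
      have : ((z - x0, (0:ℝ)) : E d × ℝ) = (z, (0:ℝ)) - (x0, (0:ℝ)) := by
        simp [Prod.ext_iff]
      rw [this, map_sub]
    have h2 : ⟪ξ, z - x0⟫ = (-c)⁻¹ * (φ (z, 0) - φ (x0, 0)) := by rw [hξ, h1]
    have h3 : (-c)⁻¹ * (φ (z, 0) - φ (x0, 0)) ≤ G z - G x0 := by
      rw [inv_mul_le_iff₀ hcpos]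
      nlinarith [hkey z]
    rw [h2]; linarith
  · have h1 : φ (u, 0) = φ (x0 + u, 0) - φ (x0, 0) := by
      have : ((u, (0:ℝ)) : E d × ℝ) = (x0 + u, (0:ℝ)) - (x0, (0:ℝ)) := by
        simp [Prod.ext_iff]
      rw [this, map_sub]
    rw [hξ, h1]
    have : 0 ≤ φ (x0 + u, 0) - φ (x0, 0) := by linarith
    positivity

lemma lag_grad_x {n m p : ℕ} (f : E n → E m → ℝ) (hf : ContDiff ℝ 1 (Function.uncurry f))
    (A : E n →L[ℝ] E p) (B : E m →L[ℝ] E p) (c : E p) (y : E m) (l : E p) (x : E n) :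
    HasGradientAt (fun x' => lag f A B c x' y l)
      (gradient (fun x' => f x' y) x - (ContinuousLinearMap.adjoint A) l) x := by
  have hdf : Differentiable ℝ (Function.uncurry f) := hf.differentiable one_ne_zero
  have hdx : DifferentiableAt ℝ (fun x' => f x' y) x :=
    (hdf (x, y)).comp (f := fun x' => (x', y)) x (differentiableAt_id.prodMk (differentiableAt_const y))
  have hg1 : HasGradientAt (fun x' => f x' y) (gradient (fun x' => f x' y) x) x :=
    hdx.hasGradientAt
  set a := (ContinuousLinearMap.adjoint A) l with ha
  have heq : (fun x' : E n => (⟪l, A x' + B y - c⟫ : ℝ))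
      = fun x' => (InnerProductSpace.toDual ℝ (E n) a) x' + ⟪l, B y - c⟫ := by
    funext x'
    rw [InnerProductSpace.toDual_apply_apply, ha, ContinuousLinearMap.adjoint_inner_left,
      add_sub_assoc, inner_add_right]
  have hg2 : HasFDerivAt (fun x' : E n => (⟪l, A x' + B y - c⟫ : ℝ))
      (InnerProductSpace.toDual ℝ (E n) a) x := by
    rw [heq]
    exact ((InnerProductSpace.toDual ℝ (E n) a).hasFDerivAt).add_const _
  have h3 := (hg1.hasFDerivAt.sub hg2).hasGradientAt
  simp only [map_sub, LinearIsometryEquiv.symm_apply_apply] at h3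
  exact h3

lemma lag_grad_y {n m p : ℕ} (f : E n → E m → ℝ) (hf : ContDiff ℝ 1 (Function.uncurry f))
    (A : E n →L[ℝ] E p) (B : E m →L[ℝ] E p) (c : E p) (x : E n) (l : E p) (y : E m) :
    HasGradientAt (fun y' => lag f A B c x y' l)
      (gradient (f x) y - (ContinuousLinearMap.adjoint B) l) y := by
  have hdf : Differentiable ℝ (Function.uncurry f) := hf.differentiable one_ne_zero
  have hdy : DifferentiableAt ℝ (f x) y :=
    (hdf (x, y)).comp y ((differentiableAt_const x).prodMk differentiableAt_id)
  have hg1 : HasGradientAt (f x) (gradient (f x) y) y := hdy.hasGradientAt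
  set b := (ContinuousLinearMap.adjoint B) l with hb
  have heq : (fun y' : E m => (⟪l, A x + B y' - c⟫ : ℝ))
      = fun y' => (InnerProductSpace.toDual ℝ (E m) b) y' + ⟪l, A x - c⟫ := by
    funext y'
    have h1 : A x + B y' - c = B y' + (A x - c) := by abel
    rw [h1, inner_add_right, InnerProductSpace.toDual_apply_apply, hb,
      ContinuousLinearMap.adjoint_inner_left]
  have hg2 : HasFDerivAt (fun y' : E m => (⟪l, A x + B y' - c⟫ : ℝ))
      (InnerProductSpace.toDual ℝ (E m) b) y := by
    rw [heq]
    exact ((InnerProductSpace.toDual ℝ (E m) b).hasFDerivAt).add_const _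
  have h3 := (hg1.hasFDerivAt.sub hg2).hasGradientAt
  simp only [map_sub, LinearIsometryEquiv.symm_apply_apply] at h3
  exact h3

lemma sq_norm_convex {d : ℕ} (v : E d) (β : ℝ) (hβ : 0 ≤ β) :
    ConvexOn ℝ Set.univ (fun z : E d => β / 2 * ‖z - v‖ ^ 2) := by
  constructor
  · exact convex_univ
  · intro z1 _ z2 _ a b ha hb hab
    have hv : a • v + b • v = v := by rw [← add_smul, hab, one_smul]
    have hcomb : (a • z1 + b • z2) - v = a • (z1 - v) + b • (z2 - v) := by
      rw [smul_sub, smul_sub]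
      nth_rewrite 1 [← hv]
      abel
    have key : ‖(a • z1 + b • z2) - v‖ ≤ a * ‖z1 - v‖ + b * ‖z2 - v‖ := by
      rw [hcomb]
      calc ‖a • (z1 - v) + b • (z2 - v)‖ ≤ ‖a • (z1 - v)‖ + ‖b • (z2 - v)‖ := norm_add_le _ _
        _ = a * ‖z1 - v‖ + b * ‖z2 - v‖ := by
            rw [norm_smul, norm_smul, Real.norm_eq_abs, Real.norm_eq_abs,
              abs_of_nonneg ha, abs_of_nonneg hb]
    have h2 : ‖(a • z1 + b • z2) - v‖ ^ 2 ≤ (a * ‖z1 - v‖ + b * ‖z2 - v‖) ^ 2 := by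
      have h0 : (0:ℝ) ≤ ‖(a • z1 + b • z2) - v‖ := norm_nonneg _
      nlinarith [key]
    have h3 : (a * ‖z1 - v‖ + b * ‖z2 - v‖) ^ 2 ≤ a * ‖z1 - v‖ ^ 2 + b * ‖z2 - v‖ ^ 2 := by
      nlinarith [mul_nonneg ha hb, sq_nonneg (‖z1 - v‖ - ‖z2 - v‖)]
    have hβ2 : (0:ℝ) ≤ β / 2 := by linarith
    simp only [smul_eq_mul]
    nlinarith [mul_le_mul_of_nonneg_left (le_trans h2 h3) hβ2]

set_option maxHeartbeats 2000000 in
/-- Lemma 2.4: a lower bound for the one-step difference of the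
Lagrangian, involving a subgradient `ξ_{k+1} ∈ ∂g(y_{k+1})`. -/
theorem lagrangian_lower_bound_one_step
    {n m p : ℕ} (X : Set (E n)) (Y : Set (E m))
    (hXne : X.Nonempty) (hXcvx : Convex ℝ X) (hXcpt : IsCompact X)
    (hYne : Y.Nonempty) (hYcvx : Convex ℝ Y) (hYcpt : IsCompact Y)
    (f : E n → E m → ℝ) (hf : ContDiff ℝ 1 (Function.uncurry f))
    (g : E m → ℝ) (hgcvx : ConvexOn ℝ Set.univ g) (hgcont : Continuous g)
    (A : E n →L[ℝ] E p) (B : E m →L[ℝ] E p) (c : E p)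
    (L : ℝ) (hL : 0 < L) (hlip : LipGrad f L)
    (β : ℝ) (hβ : 0 < β)
    (xk : E n) (yk : E m) (lk : E p) (hyk : yk ∈ Y)
    (yk1 : E m) (hyk1 : IsProx g Y β (yk + β⁻¹ • gradyL f A B c xk yk lk) yk1) :
    ∃ ξ : E m, (∀ z : E m, g yk1 + ⟪ξ, z - yk1⟫ ≤ g z) ∧
      ∀ (xk1 : E n) (lk1 : E p),
        lag f A B c xk1 yk1 lk1 - lag f A B c xk yk lk
          ≥ (β - L / 2) * ‖yk1 - yk‖ ^ 2 - L / 2 * ‖xk1 - xk‖ ^ 2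
            + ⟪-(A xk1 + B yk1 - c), lk1 - lk⟫
            + ⟪ξ, yk1 - yk⟫
            + ⟪gradxL f A B c xk yk1 lk, xk1 - xk⟫ := by
  obtain ⟨hlip1, hlip2, hlip3, hlip4⟩ := hlip
  obtain ⟨hyk1Y, hprox⟩ := hyk1
  set dvec : E m := gradyL f A B c xk yk lk with hdvec
  set v : E m := yk + β⁻¹ • dvec with hv
  set u : E m := yk - yk1 with hu
  set G : E m → ℝ := fun z => g z + β / 2 * ‖z - v‖ ^ 2 with hG
  clear_value dvec v u G
  have hGcvx : ConvexOn ℝ Set.univ G := by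
    rw [hG]; exact hgcvx.add (sq_norm_convex v β hβ.le)
  have hGcont : Continuous G := by
    rw [hG]
    exact hgcont.add (continuous_const.mul (((continuous_id.sub continuous_const).norm).pow 2))
  have hdir1 : ∀ s : ℝ, 0 < s → s ≤ 1 → G yk1 ≤ G (yk1 + s • u) := by
    intro s hs0 hs1
    have hmem : yk1 + s • u ∈ Y := by
      have h1 := hYcvx hyk1Y hyk (by linarith : (0:ℝ) ≤ 1 - s) hs0.le (by ring)
      have h2 : (1 - s) • yk1 + s • yk = yk1 + s • u := by rw [hu]; module
      rwa [h2] at h1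
    simp only [hG]
    exact hprox _ hmem
  have hdir : ∀ s : ℝ, 0 < s → G yk1 ≤ G (yk1 + s • u) := by
    intro s hs0
    rcases le_or_gt s 1 with hs1 | hs1
    · exact hdir1 s hs0 hs1
    · have ht0 : 0 < s⁻¹ := inv_pos.mpr hs0
      have hts : s⁻¹ * s = 1 := inv_mul_cancel₀ hs0.ne'
      have hsi1 : s⁻¹ ≤ 1 := by nlinarith
      have hcomb := hGcvx.2 (Set.mem_univ (yk1 + s • u)) (Set.mem_univ yk1)
        ht0.le (by linarith : (0:ℝ) ≤ 1 - s⁻¹) (by ring)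
      have hpt : s⁻¹ • (yk1 + s • u) + (1 - s⁻¹) • yk1 = yk1 + (s⁻¹ * s) • u := by module
      rw [hpt, hts, one_smul] at hcomb
      simp only [smul_eq_mul] at hcomb
      have h1 : G yk1 ≤ G (yk1 + (1:ℝ) • u) := hdir1 1 one_pos le_rfl
      rw [one_smul] at h1
      by_contra hcon
      push_neg at hcon
      have hprod := mul_pos ht0 (sub_pos.mpr hcon)
      nlinarith [h1, hcomb]
  obtain ⟨ξ0, hξ0sub, hξ0dir⟩ := exists_subgrad_dir hGcvx hGcont yk1 u hdir
  refine ⟨ξ0 - β • (yk1 - v), ?_, ?_⟩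
  · -- global subgradient of g at yk1
    intro z
    set w : E m := z - yk1 with hw
    clear_value w
    apply aux_le_of_small (C := β / 2 * ‖w‖ ^ 2) (by positivity)
    intro t ht0 ht1
    set zt : E m := yk1 + t • w with hzt
    clear_value zt
    have h1 : G yk1 + ⟪ξ0, t • w⟫ ≤ G zt := by
      have h1' := hξ0sub zt
      have h2' : zt - yk1 = t • w := by rw [hzt]; abel
      rwa [h2'] at h1'
    have h2 : g zt ≤ (1 - t) * g yk1 + t * g z := by
      have h3' := hgcvx.2 (Set.mem_univ yk1) (Set.mem_univ z)
        (by linarith : (0:ℝ) ≤ 1 - t) ht0.le (by ring)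
      have h4' : (1 - t) • yk1 + t • z = zt := by rw [hzt, hw]; module
      rw [h4'] at h3'
      simpa [smul_eq_mul] using h3'
    have h3 : ‖zt - v‖ ^ 2 = ‖yk1 - v‖ ^ 2 + 2 * (t * ⟪yk1 - v, w⟫) + t ^ 2 * ‖w‖ ^ 2 := by
      have h4' : zt - v = (yk1 - v) + t • w := by rw [hzt]; abel
      rw [h4', norm_add_sq_real, real_inner_smul_right, norm_smul]
      simp only [Real.norm_eq_abs, abs_of_pos ht0, mul_pow]
    have h4 : ⟪ξ0, t • w⟫ = t * ⟪ξ0, w⟫ := real_inner_smul_right _ _ _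
    have h5 : ⟪ξ0 - β • (yk1 - v), w⟫ = ⟪ξ0, w⟫ - β * ⟪yk1 - v, w⟫ := by
      rw [inner_sub_left, real_inner_smul_left]
    have hGy : G yk1 = g yk1 + β / 2 * ‖yk1 - v‖ ^ 2 := by rw [hG]
    have hGz : G zt = g zt + β / 2 * ‖zt - v‖ ^ 2 := by rw [hG]
    rw [hGy, hGz, h3, h4] at h1
    by_contra hcon
    push_neg at hcon
    have hX : 0 < g yk1 + ⟪ξ0 - β • (yk1 - v), w⟫ - (g z + t * (β / 2 * ‖w‖ ^ 2)) := by
      linarith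
    have htX := mul_pos ht0 hX
    nlinarith [h1, h2, h5]
  · -- the main inequality
    have hbkey : ⟪ξ0 - β • (yk1 - v), yk1 - yk⟫ ≤ ⟪dvec, yk1 - yk⟫ - β * ‖yk1 - yk‖ ^ 2 := by
      have h1 : yk1 - yk = -u := by rw [hu]; abel
      have h2 : ⟪ξ0, yk1 - yk⟫ ≤ 0 := by
        rw [h1, inner_neg_right]; linarith
      have h3 : yk1 - v = (yk1 - yk) - β⁻¹ • dvec := by rw [hv]; abel
      have h4 : ⟪ξ0 - β • (yk1 - v), yk1 - yk⟫
          = ⟪ξ0, yk1 - yk⟫ - β * ⟪yk1 - v, yk1 - yk⟫ := by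
        rw [inner_sub_left, real_inner_smul_left]
      have h5 : ⟪yk1 - v, yk1 - yk⟫ = ‖yk1 - yk‖ ^ 2 - β⁻¹ * ⟪dvec, yk1 - yk⟫ := by
        rw [h3, inner_sub_left, real_inner_smul_left, real_inner_self_eq_norm_sq]
      have hββ : β * β⁻¹ = 1 := mul_inv_cancel₀ hβ.ne'
      calc ⟪ξ0 - β • (yk1 - v), yk1 - yk⟫
          = ⟪ξ0, yk1 - yk⟫ - β * (‖yk1 - yk‖ ^ 2 - β⁻¹ * ⟪dvec, yk1 - yk⟫) := by
            rw [h4, h5]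
        _ = ⟪ξ0, yk1 - yk⟫ - β * ‖yk1 - yk‖ ^ 2 + (β * β⁻¹) * ⟪dvec, yk1 - yk⟫ := by ring
        _ = ⟪ξ0, yk1 - yk⟫ - β * ‖yk1 - yk‖ ^ 2 + ⟪dvec, yk1 - yk⟫ := by rw [hββ]; ring
        _ ≤ ⟪dvec, yk1 - yk⟫ - β * ‖yk1 - yk‖ ^ 2 := by linarith
    intro xk1 lk1
    -- descent in x
    have hxgrad : ∀ x : E n, HasGradientAt (fun x' => lag f A B c x' yk1 lk)
        ((fun x => gradient (fun x' => f x' yk1) x - (ContinuousLinearMap.adjoint A) lk) x) x :=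
      fun x => lag_grad_x f hf A B c yk1 lk x
    have hlipx : ∀ a b : E n,
        ‖(gradient (fun x' => f x' yk1) a - (ContinuousLinearMap.adjoint A) lk)
          - (gradient (fun x' => f x' yk1) b - (ContinuousLinearMap.adjoint A) lk)‖
          ≤ L * ‖a - b‖ := by
      intro a b
      simpa [sub_sub_sub_cancel_right] using hlip1 a b yk1
    have hxdesc := descent_lower hxgrad hlipx xk xk1
    -- descent in y
    have hygrad : ∀ y : E m, HasGradientAt (fun y' => lag f A B c xk y' lk)
        ((fun y => gradient (f xk) y - (ContinuousLinearMap.adjoint B) lk) y) y :=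
      fun y => lag_grad_y f hf A B c xk lk y
    have hlipy : ∀ a b : E m,
        ‖(gradient (f xk) a - (ContinuousLinearMap.adjoint B) lk)
          - (gradient (f xk) b - (ContinuousLinearMap.adjoint B) lk)‖
          ≤ L * ‖a - b‖ := by
      intro a b
      simpa [sub_sub_sub_cancel_right] using hlip3 xk a b
    have hydesc := descent_lower hygrad hlipy yk yk1
    have hyg_eq : dvec = gradient (f xk) yk - (ContinuousLinearMap.adjoint B) lk := by
      rw [hdvec]
      exact (lag_grad_y f hf A B c xk lk yk).gradient
    rw [← hyg_eq] at hydesc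
    -- lambda part
    have hT1 : lag f A B c xk1 yk1 lk1 - lag f A B c xk1 yk1 lk
        = ⟪-(A xk1 + B yk1 - c), lk1 - lk⟫ := by
      have e1 : (⟪-(A xk1 + B yk1 - c), lk1 - lk⟫ : ℝ)
          = ⟪lk, A xk1 + B yk1 - c⟫ - ⟪lk1, A xk1 + B yk1 - c⟫ := by
        rw [inner_neg_left, inner_sub_right, real_inner_comm lk (A xk1 + B yk1 - c),
          real_inner_comm lk1 (A xk1 + B yk1 - c)]
        ring
      rw [e1]
      simp only [lag]
      ring
    rw [ge_iff_le, show gradxL f A B c xk yk1 lk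
      = gradient (fun x' => f x' yk1) xk - (ContinuousLinearMap.adjoint A) lk
      from (lag_grad_x f hf A B c yk1 lk xk).gradient]
    have hdecomp : lag f A B c xk1 yk1 lk1 - lag f A B c xk yk lk
        = (lag f A B c xk1 yk1 lk1 - lag f A B c xk1 yk1 lk)
          + (lag f A B c xk1 yk1 lk - lag f A B c xk yk1 lk)
          + (lag f A B c xk yk1 lk - lag f A B c xk yk lk) := by ring
    rw [hdecomp, hT1]
    linarith [hxdesc, hydesc, hbkey]
end
end

section
/- Assume (Lip). Let α, β, γ > 0, let x_k ∈ X, y_k ∈ Y, λ_k ∈ Λ, and define y_{k+1} := Prox^β_{g,Y}(y_k + (1/β)∇_yL(x_k,y_k,λ_k)), x_{k+1} := Prox^α_{h,X}(x_k − (1/α)∇_xL(x_k,y_{k+1},λ_k)), λ_{k+1} := P_Λ(λ_k + γ(Ax_{k+1}+By_{k+1}−c)). Then ‖∇G^{α,β,γ}(x_k,y_k,λ_k)‖² ≤ (β² + 2L² + 3‖B‖²)·‖y_{k+1}−y_k‖² + (2α² + 3‖A‖²)·‖x_{k+1}−x_k‖² + (3/γ²)·‖λ_{k+1}−λ_k‖².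 -/
open scoped RealInnerProductSpace

noncomputable section

section AuxLemmas

lemma comb_sq {d : ℕ} (a b : E d) (t : ℝ) :
    ‖(1-t) • a + t • b‖^2 = (1-t)*‖a‖^2 + t*‖b‖^2 - t*(1-t)*‖a-b‖^2 := by
  have e : ∀ u : E d, ‖u‖^2 = ⟪u,u⟫ := fun u => (real_inner_self_eq_norm_sq u).symm
  rw [e, e, e, e]
  simp only [inner_add_left, inner_add_right, inner_sub_left, inner_sub_right,
    inner_smul_left, inner_smul_right, RCLike.conj_to_real]
  rw [real_inner_comm b a]
  ring

lemma prox_strong {d : ℕ} {φ : E d → ℝ} {Z : Set (E d)} (hZ : Convex ℝ Z)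
    (hφ : ConvexOn ℝ Set.univ φ) {α : ℝ} (hα : 0 < α) {v w : E d}
    (hw : IsProx φ Z α v w) {z : E d} (hz : z ∈ Z) :
    φ w + α/2 * ‖w-v‖^2 + α/2 * ‖z-w‖^2 ≤ φ z + α/2 * ‖z-v‖^2 := by
  obtain ⟨hwZ, hmin⟩ := hw
  have key : ∀ t ∈ Set.Ioo (0:ℝ) 1,
      φ w + α/2*‖w-v‖^2 + α/2*((1-t)*‖z-w‖^2) ≤ φ z + α/2*‖z-v‖^2 := by
    intro t ht
    have hmem : (1-t) • w + t • z ∈ Z :=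
      hZ hwZ hz (by linarith [ht.2]) ht.1.le (by ring)
    have h1 := hmin _ hmem
    have h2 : φ ((1-t)•w + t•z) ≤ (1-t)*φ w + t*φ z :=
      hφ.2 (Set.mem_univ w) (Set.mem_univ z) (by linarith [ht.2]) ht.1.le (by ring)
    have h3 : ‖((1-t)•w + t•z) - v‖^2
        = (1-t)*‖w-v‖^2 + t*‖z-v‖^2 - t*(1-t)*‖(w-v)-(z-v)‖^2 := by
      have hc := comb_sq (w-v) (z-v) t
      have he : (1-t) • (w-v) + t • (z-v) = ((1-t)•w + t•z) - v := by
        module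
      rw [he] at hc; exact hc
    have h4 : (w-v)-(z-v) = w - z := by abel
    rw [h4] at h3
    have h5 : ‖w - z‖ = ‖z - w‖ := norm_sub_rev w z
    rw [h3, h5] at h1
    have hc : t*(φ w + α/2*‖w-v‖^2 + α/2*((1-t)*‖z-w‖^2))
        ≤ t*(φ z + α/2*‖z-v‖^2) := by nlinarith [ht.1]
    exact le_of_mul_le_mul_left (by linarith) ht.1
  have htend : Filter.Tendsto
      (fun t : ℝ => φ w + α/2*‖w-v‖^2 + α/2*((1-t)*‖z-w‖^2))
      (nhdsWithin 0 (Set.Ioi 0))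
      (nhds (φ w + α/2*‖w-v‖^2 + α/2*((1-(0:ℝ))*‖z-w‖^2))) := by
    apply Filter.Tendsto.mono_left _ nhdsWithin_le_nhds
    exact (Continuous.tendsto (by continuity) 0)
  have hev : ∀ᶠ t in nhdsWithin (0:ℝ) (Set.Ioi 0),
      (fun t : ℝ => φ w + α/2*‖w-v‖^2 + α/2*((1-t)*‖z-w‖^2)) t
        ≤ φ z + α/2*‖z-v‖^2 :=
    Filter.eventually_of_mem (Ioo_mem_nhdsGT_of_mem ⟨le_refl 0, one_pos⟩) key
  have := le_of_tendsto htend hev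
  simp only [sub_zero, one_mul] at this
  linarith

lemma prox_nonexpansive {d : ℕ} {φ : E d → ℝ} {Z : Set (E d)} (hZ : Convex ℝ Z)
    (hφ : ConvexOn ℝ Set.univ φ) {α : ℝ} (hα : 0 < α) {v v' w w' : E d}
    (hw : IsProx φ Z α v w) (hw' : IsProx φ Z α v' w') :
    ‖w - w'‖ ≤ ‖v - v'‖ := by
  have h1 := prox_strong hZ hφ hα hw hw'.1
  have h2 := prox_strong hZ hφ hα hw' hw.1
  have key : ‖w - w'‖^2 ≤ ⟪w - w', v - v'⟫ := by
    have e1 := norm_sub_sq_real w v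
    have e2 := norm_sub_sq_real w v'
    have e3 := norm_sub_sq_real w' v
    have e4 := norm_sub_sq_real w' v'
    have e5 := norm_sub_sq_real w w'
    have e6 : ‖w' - w‖ = ‖w - w'‖ := norm_sub_rev w' w
    have e7 : ⟪w - w', v - v'⟫ = ⟪w,v⟫ - ⟪w,v'⟫ - ⟪w',v⟫ + ⟪w',v'⟫ := by
      simp [inner_sub_left, inner_sub_right]; ring
    rw [e6] at h1
    have h3 : α/2 * ‖w-v‖^2 + α/2*‖w'-v'‖^2 + α*‖w-w'‖^2
        ≤ α/2*‖w'-v‖^2 + α/2*‖w-v'‖^2 := by linarith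
    have h4 : α/2*‖w'-v‖^2 + α/2*‖w-v'‖^2 - α/2*‖w-v‖^2 - α/2*‖w'-v'‖^2
        = α*⟪w-w',v-v'⟫ := by rw [e1, e2, e3, e4, e7]; ring
    have h5 : α*‖w-w'‖^2 ≤ α*⟪w-w',v-v'⟫ := by linarith
    exact (mul_le_mul_iff_right₀ hα).mp h5
  have hcs := real_inner_le_norm (w - w') (v - v')
  nlinarith [norm_nonneg (w - w'), norm_nonneg (v - v'), key, hcs]

lemma posPart_nonexpansive {p : ℕ} (u v : E p) : ‖posPart u - posPart v‖ ≤ ‖u - v‖ := by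
  rw [EuclideanSpace.norm_eq, EuclideanSpace.norm_eq]
  apply Real.sqrt_le_sqrt
  apply Finset.sum_le_sum
  intro i _
  have h1 : (posPart u - posPart v) i = max 0 (u i) - max 0 (v i) := rfl
  have h2 : (u - v) i = u i - v i := rfl
  rw [h1, h2, Real.norm_eq_abs, Real.norm_eq_abs]
  have h3 : |max 0 (u i) - max 0 (v i)| ≤ |u i - v i| := by
    rw [max_comm 0 (u i), max_comm 0 (v i)]
    exact abs_max_sub_max_le_abs (u i) (v i) 0
  exact pow_le_pow_left₀ (abs_nonneg _) h3 2

lemma HasGradientAt.sub'' {d : ℕ} {f g : E d → ℝ} {a b x : E d}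
    (hf : HasGradientAt f a x) (hg : HasGradientAt g b x) :
    HasGradientAt (fun z => f z - g z) (a - b) x := by
  rw [hasGradientAt_iff_hasFDerivAt] at *
  have := hf.sub hg
  exact this.congr_fderiv (by simp [map_sub])

lemma hasGradientAt_linear {n p : ℕ} (A : E n →L[ℝ] E p) (l b : E p) (x : E n) :
    HasGradientAt (fun x' => ⟪l, A x' + b⟫) ((ContinuousLinearMap.adjoint A) l) x := by
  rw [hasGradientAt_iff_hasFDerivAt]
  have h1 : HasFDerivAt (fun x' : E n => A x' + b) (A : E n →L[ℝ] E p) x :=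
    (A.hasFDerivAt).add_const b
  have h2 := (innerSL ℝ l).hasFDerivAt.comp x h1
  exact h2.congr_fderiv (by ext u; simp [InnerProductSpace.toDual_apply_apply, ContinuousLinearMap.adjoint_inner_left])

lemma gradxL_eq {n m p : ℕ} (f : E n → E m → ℝ) (hf : ContDiff ℝ 1 (Function.uncurry f))
    (A : E n →L[ℝ] E p) (B : E m →L[ℝ] E p) (c : E p) (x : E n) (y : E m) (l : E p) :
    gradxL f A B c x y l
      = gradient (fun x' => f x' y) x - (ContinuousLinearMap.adjoint A) l := by
  have hd : DifferentiableAt ℝ (Function.uncurry f) (x, y) :=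
    (hf.differentiable one_ne_zero).differentiableAt
  have hdf : DifferentiableAt ℝ (fun x' : E n => f x' y) x :=
    by have := hd.comp x ((differentiableAt_fun_id (𝕜 := ℝ) (x := x)).prodMk (differentiableAt_const y)); exact this
  have h1 := hdf.hasGradientAt
  have h2 := hasGradientAt_linear A l (B y - c) x
  have h3 := h1.sub'' h2
  have heq : (fun x' => f x' y - ⟪l, A x' + (B y - c)⟫)
      = fun x' => lag f A B c x' y l := by
    funext x'; simp [lag, add_sub_assoc]
  rw [heq] at h3
  exact h3.gradient

end AuxLemmas

set_option maxHeartbeats 1000000 in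
/-- Lemma 2.6: upper bound on the squared stationarity measure
`‖∇G^{α,β,γ}(x_k,y_k,λ_k)‖²` in terms of the successive iterate differences of one
full PDAPG iteration. -/
theorem stationarity_measure_bound
    {n m p : ℕ} (X : Set (E n)) (Y : Set (E m))
    (hXne : X.Nonempty) (hXcvx : Convex ℝ X) (hXcpt : IsCompact X)
    (hYne : Y.Nonempty) (hYcvx : Convex ℝ Y) (hYcpt : IsCompact Y)
    (f : E n → E m → ℝ) (hf : ContDiff ℝ 1 (Function.uncurry f))
    (h : E n → ℝ) (hhcvx : ConvexOn ℝ Set.univ h) (hhcont : Continuous h)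
    (g : E m → ℝ) (hgcvx : ConvexOn ℝ Set.univ g) (hgcont : Continuous g)
    (A : E n →L[ℝ] E p) (B : E m →L[ℝ] E p) (c : E p)
    (L : ℝ) (hL : 0 < L) (hlip : LipGrad f L)
    (Λ : Set (E p)) (PΛ : E p → E p) (hΛ : LamProj Λ PΛ)
    (α β γ : ℝ) (hα : 0 < α) (hβ : 0 < β) (hγ : 0 < γ)
    (xk : E n) (yk : E m) (lk : E p) (hxk : xk ∈ X) (hyk : yk ∈ Y) (hlk : lk ∈ Λ)
    (yk1 : E m) (hyk1 : IsProx g Y β (yk + β⁻¹ • gradyL f A B c xk yk lk) yk1)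
    (xk1 : E n) (hxk1 : IsProx h X α (xk - α⁻¹ • gradxL f A B c xk yk1 lk) xk1)
    (lk1 : E p) (hlk1 : lk1 = PΛ (lk + γ • (A xk1 + B yk1 - c)))
    (px : E n) (hpx : IsProx h X α (xk - α⁻¹ • gradxL f A B c xk yk lk) px) :
    ‖α • (xk - px)‖ ^ 2 + ‖β • (yk - yk1)‖ ^ 2
        + ‖γ⁻¹ • (lk - PΛ (lk + γ • (A xk + B yk - c)))‖ ^ 2
      ≤ (β ^ 2 + 2 * L ^ 2 + 3 * ‖B‖ ^ 2) * ‖yk1 - yk‖ ^ 2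
        + (2 * α ^ 2 + 3 * ‖A‖ ^ 2) * ‖xk1 - xk‖ ^ 2
        + 3 / γ ^ 2 * ‖lk1 - lk‖ ^ 2 := by
  set a := ‖xk1 - xk‖ with ha
  set b := ‖yk1 - yk‖ with hb
  set dl := ‖lk1 - lk‖ with hdl
  have ha0 : 0 ≤ a := norm_nonneg _
  have hb0 : 0 ≤ b := norm_nonneg _
  have hdl0 : 0 ≤ dl := norm_nonneg _
  have hnA0 : 0 ≤ ‖A‖ := norm_nonneg _
  have hnB0 : 0 ≤ ‖B‖ := norm_nonneg _
  -- Term 1 (y-block): exact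
  have T1 : ‖β • (yk - yk1)‖ ^ 2 = β ^ 2 * b ^ 2 := by
    rw [norm_smul, Real.norm_eq_abs, abs_of_pos hβ, norm_sub_rev yk yk1, ← hb]
    ring
  -- gradient difference bound
  have hgd : ‖gradxL f A B c xk yk lk - gradxL f A B c xk yk1 lk‖ ≤ L * b := by
    rw [gradxL_eq f hf A B c xk yk lk, gradxL_eq f hf A B c xk yk1 lk]
    have he : (gradient (fun x' => f x' yk) xk - (ContinuousLinearMap.adjoint A) lk)
        - (gradient (fun x' => f x' yk1) xk - (ContinuousLinearMap.adjoint A) lk)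
        = gradient (fun x' => f x' yk) xk - gradient (fun x' => f x' yk1) xk := by abel
    rw [he]
    have := hlip.2.1 xk yk yk1
    rw [norm_sub_rev yk yk1] at this
    exact this
  -- prox nonexpansiveness: px vs xk1
  have hpxx : α * ‖px - xk1‖ ≤ L * b := by
    have hne := prox_nonexpansive hXcvx hhcvx hα hpx hxk1
    have hveq : (xk - α⁻¹ • gradxL f A B c xk yk lk)
        - (xk - α⁻¹ • gradxL f A B c xk yk1 lk)
        = α⁻¹ • (gradxL f A B c xk yk1 lk - gradxL f A B c xk yk lk) := by
      module
    rw [hveq, norm_smul, Real.norm_eq_abs, abs_of_pos (inv_pos.mpr hα),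
      norm_sub_rev (gradxL f A B c xk yk1 lk) (gradxL f A B c xk yk lk)] at hne
    have h2 : α * ‖px - xk1‖ ≤ α * (α⁻¹ * ‖gradxL f A B c xk yk lk - gradxL f A B c xk yk1 lk‖) :=
      mul_le_mul_of_nonneg_left hne hα.le
    rw [← mul_assoc, mul_inv_cancel₀ hα.ne', one_mul] at h2
    exact h2.trans hgd
  -- Term 2 (x-block)
  have T2 : ‖α • (xk - px)‖ ^ 2 ≤ 2 * α ^ 2 * a ^ 2 + 2 * L ^ 2 * b ^ 2 := by
    have hn : ‖α • (xk - px)‖ ≤ α * a + L * b := by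
      rw [norm_smul, Real.norm_eq_abs, abs_of_pos hα]
      have htr : ‖xk - px‖ ≤ ‖xk - xk1‖ + ‖xk1 - px‖ := by
        have : xk - px = (xk - xk1) + (xk1 - px) := by abel
        rw [this]; exact norm_add_le _ _
      have h1 : α * ‖xk - px‖ ≤ α * ‖xk - xk1‖ + α * ‖xk1 - px‖ := by
        nlinarith [htr]
      have h2 : α * ‖xk1 - px‖ ≤ L * b := by
        rw [norm_sub_rev]; exact hpxx
      rw [norm_sub_rev xk xk1, ← ha] at h1
      linarith
    have hsq : ‖α • (xk - px)‖ ^ 2 ≤ (α * a + L * b) ^ 2 := by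
      have := pow_le_pow_left₀ (norm_nonneg _) hn 2
      exact this
    nlinarith [sq_nonneg (α * a - L * b)]
  -- PΛ nonexpansive
  have hP : ∀ u v : E p, ‖PΛ u - PΛ v‖ ≤ ‖u - v‖ := by
    rcases hΛ with ⟨_, hPe⟩ | ⟨_, hPe⟩
    · intro u v; rw [hPe u, hPe v]; exact posPart_nonexpansive u v
    · intro u v; rw [hPe u, hPe v]
  -- Term 3 (λ-block)
  set q := PΛ (lk + γ • (A xk + B yk - c)) with hq
  set s := ‖lk - q‖ with hs'
  have hs0 : 0 ≤ s := norm_nonneg _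
  have hlk1q : ‖lk1 - q‖ ≤ γ * (‖A‖ * a) + γ * (‖B‖ * b) := by
    rw [hlk1, hq]
    refine (hP (lk + γ • (A xk1 + B yk1 - c)) (lk + γ • (A xk + B yk - c))).trans ?_
    have he : (lk + γ • (A xk1 + B yk1 - c)) - (lk + γ • (A xk + B yk - c))
        = γ • (A (xk1 - xk) + B (yk1 - yk)) := by
      simp only [map_sub]; module
    rw [he, norm_smul, Real.norm_eq_abs, abs_of_pos hγ]
    have h1 : ‖A (xk1 - xk) + B (yk1 - yk)‖ ≤ ‖A‖ * a + ‖B‖ * b := by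
      refine (norm_add_le _ _).trans ?_
      have := A.le_opNorm (xk1 - xk)
      have := B.le_opNorm (yk1 - yk)
      rw [← ha] at *
      linarith [A.le_opNorm (xk1 - xk), B.le_opNorm (yk1 - yk)]
    exact (mul_le_mul_of_nonneg_left h1 hγ.le).trans (le_of_eq (by ring))
  have hs : s ≤ dl + γ * (‖A‖ * a) + γ * (‖B‖ * b) := by
    have htr : ‖lk - q‖ ≤ ‖lk - lk1‖ + ‖lk1 - q‖ := by
      have : lk - q = (lk - lk1) + (lk1 - q) := by abel
      rw [this]; exact norm_add_le _ _
    rw [norm_sub_rev lk lk1, ← hdl] at htr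
    exact htr.trans (by linarith)
  have hs2 : s ^ 2 ≤ 3 * dl ^ 2 + 3 * (γ * (‖A‖ * a)) ^ 2 + 3 * (γ * (‖B‖ * b)) ^ 2 := by
    have h2 := pow_le_pow_left₀ hs0 hs 2
    nlinarith [sq_nonneg (dl - γ * (‖A‖ * a)), sq_nonneg (dl - γ * (‖B‖ * b)),
      sq_nonneg (γ * (‖A‖ * a) - γ * (‖B‖ * b))]
  have hγ2 : (0:ℝ) < γ ^ 2 := by positivity
  have T3 : ‖γ⁻¹ • (lk - q)‖ ^ 2
      ≤ 3 / γ ^ 2 * dl ^ 2 + 3 * ‖A‖ ^ 2 * a ^ 2 + 3 * ‖B‖ ^ 2 * b ^ 2 := by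
    have he : ‖γ⁻¹ • (lk - q)‖ ^ 2 = (γ ^ 2)⁻¹ * s ^ 2 := by
      rw [norm_smul, Real.norm_eq_abs, abs_of_pos (inv_pos.mpr hγ), ← hs']
      field_simp
    rw [he]
    have h1 : (γ ^ 2)⁻¹ * s ^ 2
        ≤ (γ ^ 2)⁻¹ * (3 * dl ^ 2 + 3 * (γ * (‖A‖ * a)) ^ 2 + 3 * (γ * (‖B‖ * b)) ^ 2) :=
      mul_le_mul_of_nonneg_left hs2 (inv_nonneg.mpr hγ2.le)
    refine h1.trans (le_of_eq ?_)
    field_simp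
  calc ‖α • (xk - px)‖ ^ 2 + ‖β • (yk - yk1)‖ ^ 2 + ‖γ⁻¹ • (lk - q)‖ ^ 2
      ≤ (2 * α ^ 2 * a ^ 2 + 2 * L ^ 2 * b ^ 2) + β ^ 2 * b ^ 2
        + (3 / γ ^ 2 * dl ^ 2 + 3 * ‖A‖ ^ 2 * a ^ 2 + 3 * ‖B‖ ^ 2 * b ^ 2) := by
        rw [T1]; linarith [T2, T3]
    _ = (β ^ 2 + 2 * L ^ 2 + 3 * ‖B‖ ^ 2) * b ^ 2 + (2 * α ^ 2 + 3 * ‖A‖ ^ 2) * a ^ 2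
        + 3 / γ ^ 2 * dl ^ 2 := by ring
end
end

section
/- Assume (Lip) and that y ↦ f(x,y) is affine for every x ∈ ℝⁿ. Let q > 0, p ≥ 0, fix ȳ ∈ ℝᵐ, define L̄(x,y,λ) := L(x,y,λ) − (q/2)‖y‖² − (p/2)‖y−ȳ‖², and let y*(x,λ) denote the unique maximizer of L̄(x,·,λ) over Y. Then for all x₁,x₂ ∈ ℝⁿ and λ₁,λ₂ ∈ ℝᵖ, ‖y*(x₁,λ₁) − y*(x₂,λ₂)‖ ≤ (L_B/(q+p))·‖(x₁;λ₁) − (x₂;λ₂)‖, where L_B := L + ‖B‖. -/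
open scoped RealInnerProductSpace

noncomputable section

/-- The regularized Lagrangian `L̄(x,y,λ) = L(x,y,λ) − (q/2)‖y‖² − (p/2)‖y−ȳ‖²`. -/
def regLag {n m p : ℕ} (f : E n → E m → ℝ) (A : E n →L[ℝ] E p) (B : E m →L[ℝ] E p)
    (c : E p) (q pp : ℝ) (yc : E m) (x : E n) (y : E m) (l : E p) : ℝ :=
  lag f A B c x y l - q / 2 * ‖y‖ ^ 2 - pp / 2 * ‖y - yc‖ ^ 2


/-- Variational inequality for the maximizer of a strongly concave quadratic. -/
lemma quad_max_vi' {d : ℕ} {Y : Set (E d)} (hY : Convex ℝ Y) {σ : ℝ} (hσ : 0 < σ)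
    {a w : E d} (hw : w ∈ Y)
    (hmax : ∀ z ∈ Y, ⟪a, z⟫ - σ / 2 * ‖z‖ ^ 2 ≤ ⟪a, w⟫ - σ / 2 * ‖w‖ ^ 2)
    {z : E d} (hz : z ∈ Y) : ⟪a, z - w⟫ - σ * ⟪w, z - w⟫ ≤ 0 := by
  set c : ℝ := ⟪a, z - w⟫ - σ * ⟪w, z - w⟫ with hc
  set K : ℝ := σ / 2 * ‖z - w‖ ^ 2 with hK
  have hKnn : 0 ≤ K := by positivity
  have key : ∀ t : ℝ, 0 < t → t ≤ 1 → c ≤ t * K := by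
    intro t ht0 ht1
    have hmem : w + t • (z - w) ∈ Y := by
      have : (1 - t) • w + t • z ∈ Y := hY hw hz (by linarith) ht0.le (by ring)
      have e : (1 - t) • w + t • z = w + t • (z - w) := by module
      rwa [e] at this
    have h := hmax _ hmem
    have e1 : ⟪a, w + t • (z - w)⟫ = ⟪a, w⟫ + t * ⟪a, z - w⟫ := by
      rw [inner_add_right, real_inner_smul_right]
    have e2 : ‖w + t • (z - w)‖ ^ 2
        = ‖w‖ ^ 2 + 2 * (t * ⟪w, z - w⟫) + t ^ 2 * ‖z - w‖ ^ 2 := by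
      rw [norm_add_sq_real, real_inner_smul_right, norm_smul]
      rw [mul_pow, Real.norm_eq_abs, sq_abs]
    rw [e1, e2] at h
    have h' : t * c ≤ t ^ 2 * (σ / 2 * ‖z - w‖ ^ 2) := by
      rw [hc]; ring_nf; ring_nf at h; nlinarith [h]
    have := (mul_le_mul_iff_right₀ ht0).mp (by nlinarith [h'] : t * c ≤ t * (t * K))
    nlinarith [this, ht1, hKnn]
  by_contra hcontra
  push_neg at hcontra
  have hcpos : 0 < c := hcontra
  have ht0 : 0 < min 1 (c / (2 * (K + 1))) := by
    apply lt_min one_pos; positivity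
  have h1 := key _ ht0 (min_le_left _ _)
  have h2 : min 1 (c / (2 * (K + 1))) ≤ c / (2 * (K + 1)) := min_le_right _ _
  have h3 : min 1 (c / (2 * (K + 1))) * K ≤ c / (2 * (K + 1)) * K :=
    mul_le_mul_of_nonneg_right h2 hKnn
  have h4 : c ≤ c / (2 * (K + 1)) * K := le_trans h1 h3
  have hKp : 0 < 2 * (K + 1) := by linarith
  rw [div_mul_eq_mul_div, le_div_iff₀ hKp] at h4
  nlinarith [h4, hcpos, hKnn]

/-- Contraction estimate for maximizers of strongly concave quadratics. -/
lemma quad_max_contraction' {d : ℕ} {Y : Set (E d)} (hY : Convex ℝ Y) {σ : ℝ} (hσ : 0 < σ)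
    {a₁ a₂ w₁ w₂ : E d} (hw₁ : w₁ ∈ Y) (hw₂ : w₂ ∈ Y)
    (h₁ : ∀ z ∈ Y, ⟪a₁, z⟫ - σ / 2 * ‖z‖ ^ 2 ≤ ⟪a₁, w₁⟫ - σ / 2 * ‖w₁‖ ^ 2)
    (h₂ : ∀ z ∈ Y, ⟪a₂, z⟫ - σ / 2 * ‖z‖ ^ 2 ≤ ⟪a₂, w₂⟫ - σ / 2 * ‖w₂‖ ^ 2) :
    ‖w₁ - w₂‖ ≤ ‖a₁ - a₂‖ / σ := by
  have v1 := quad_max_vi' hY hσ hw₁ h₁ hw₂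
  have v2 := quad_max_vi' hY hσ hw₂ h₂ hw₁
  have e1 : w₁ - w₂ = -(w₂ - w₁) := by abel
  have key : σ * ‖w₁ - w₂‖ ^ 2 ≤ ⟪a₁ - a₂, w₁ - w₂⟫ := by
    have sum : ⟪a₁ - a₂, w₂ - w₁⟫ - σ * ⟪w₁ - w₂, w₂ - w₁⟫ ≤ 0 := by
      rw [inner_sub_left, inner_sub_left]
      rw [e1] at v2; rw [inner_neg_right, inner_neg_right] at v2
      linarith [v1, v2]
    have e2 : ⟪w₁ - w₂, w₂ - w₁⟫ = -‖w₁ - w₂‖ ^ 2 := by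
      rw [show w₂ - w₁ = -(w₁ - w₂) by abel, inner_neg_right,
        real_inner_self_eq_norm_sq]
    have e3 : ⟪a₁ - a₂, w₂ - w₁⟫ = -⟪a₁ - a₂, w₁ - w₂⟫ := by
      rw [show w₂ - w₁ = -(w₁ - w₂) by abel, inner_neg_right]
    rw [e2, e3] at sum; linarith
  have cs : ⟪a₁ - a₂, w₁ - w₂⟫ ≤ ‖a₁ - a₂‖ * ‖w₁ - w₂‖ := real_inner_le_norm _ _
  rcases eq_or_lt_of_le (norm_nonneg (w₁ - w₂)) with h0 | h0
  · rw [← h0]; positivity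
  · rw [le_div_iff₀ hσ]
    have : σ * ‖w₁ - w₂‖ ^ 2 ≤ ‖a₁ - a₂‖ * ‖w₁ - w₂‖ := le_trans key cs
    nlinarith [this, h0]

set_option maxHeartbeats 1000000 in
/-- in the nonconvex–linear setting, the maximizer map
`(x,λ) ↦ y*(x,λ)` of the regularized Lagrangian over `Y` is Lipschitz with constant
`L_B/(q+p)`, where `L_B = L + ‖B‖`. -/
theorem maximizer_map_lipschitz
    {n m p : ℕ} (Y : Set (E m))
    (hYne : Y.Nonempty) (hYcvx : Convex ℝ Y) (hYcpt : IsCompact Y)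
    (f : E n → E m → ℝ) (hf : ContDiff ℝ 1 (Function.uncurry f))
    (A : E n →L[ℝ] E p) (B : E m →L[ℝ] E p) (c : E p)
    (L : ℝ) (hL : 0 < L) (hlip : LipGrad f L)
    (haff : ∀ (x : E n) (y₁ y₂ : E m) (t : ℝ),
      f x (y₁ + t • (y₂ - y₁)) = f x y₁ + t * (f x y₂ - f x y₁))
    (q pp : ℝ) (hq : 0 < q) (hpp : 0 ≤ pp) (yc : E m)
    (ystar : E n → E p → E m)
    (hystarY : ∀ x l, ystar x l ∈ Y)
    (hystar : ∀ x l, ∀ z ∈ Y,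
      regLag f A B c q pp yc x z l ≤ regLag f A B c q pp yc x (ystar x l) l) :
    ∀ (x₁ x₂ : E n) (l₁ l₂ : E p),
      ‖ystar x₁ l₁ - ystar x₂ l₂‖
        ≤ (L + ‖B‖) / (q + pp) * Real.sqrt (‖x₁ - x₂‖ ^ 2 + ‖l₁ - l₂‖ ^ 2)  := by
  -- Step 1: extract the linear representation of `f x ·`.
  have hbex : ∀ x : E n, ∃ b : E m, ∀ y, f x y = f x 0 + ⟪b, y⟫ := by
    intro x
    have hsmul : ∀ (t : ℝ) (y : E m), f x (t • y) = f x 0 + t * (f x y - f x 0) := by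
      intro t y
      have := haff x 0 y t
      simpa using this
    have hadd : ∀ y z : E m, f x (y + z) - f x 0 = (f x y - f x 0) + (f x z - f x 0) := by
      intro y z
      have h1 := haff x y z (1/2 : ℝ)
      have h2 := hsmul (1/2 : ℝ) (y + z)
      have e : y + (1/2 : ℝ) • (z - y) = (1/2 : ℝ) • (y + z) := by module
      rw [e, h2] at h1
      linarith
    let g : E m →ₗ[ℝ] ℝ :=
      { toFun := fun y => f x y - f x 0
        map_add' := hadd
        map_smul' := by
          intro t y
          simp only [RingHom.id_apply, smul_eq_mul, hsmul t y]
          ring }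
    refine ⟨(InnerProductSpace.toDual ℝ (E m)).symm (LinearMap.toContinuousLinearMap g),
      fun y => ?_⟩
    rw [InnerProductSpace.toDual_symm_apply]
    simp only [LinearMap.coe_toContinuousLinearMap', g, LinearMap.coe_mk, AddHom.coe_mk]
    ring
  choose b hb using hbex
  -- Step 2: the gradient of `f x ·` is `b x`, hence `b` is `L`-Lipschitz.
  have hgrad : ∀ (x : E n) (y : E m), gradient (f x) y = b x := by
    intro x y
    have h1 : HasFDerivAt (fun y' : E m => f x 0 + ⟪b x, y'⟫) (innerSL ℝ (b x)) y :=
      (innerSL ℝ (b x)).hasFDerivAt.const_add (f x 0)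
    have h3 : (InnerProductSpace.toDual ℝ (E m)) (b x) = innerSL ℝ (b x) := by
      ext z; simp [InnerProductSpace.toDual_apply_apply]
    have hfx : (f x) = fun y' => f x 0 + ⟪b x, y'⟫ := funext (hb x)
    have : HasGradientAt (f x) (b x) y := by
      rw [hasGradientAt_iff_hasFDerivAt, h3, hfx]; exact h1
    exact this.gradient
  have hbL : ∀ x₁ x₂ : E n, ‖b x₁ - b x₂‖ ≤ L * ‖x₁ - x₂‖ := by
    intro x₁ x₂
    have := hlip.2.2.2 x₁ x₂ 0
    rwa [hgrad x₁ 0, hgrad x₂ 0] at this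
  -- Step 3: rewrite the regularized Lagrangian as a concave quadratic.
  set σ : ℝ := q + pp with hσdef
  have hσ : 0 < σ := by positivity
  set a : E n → E p → E m :=
    fun x l => b x - (ContinuousLinearMap.adjoint B) l + pp • yc with ha
  have hreg : ∀ (x : E n) (y : E m) (l : E p),
      regLag f A B c q pp yc x y l
        = (⟪a x l, y⟫ - σ / 2 * ‖y‖ ^ 2)
          + (f x 0 - ⟪l, A x - c⟫ - pp / 2 * ‖yc‖ ^ 2) := by
    intro x y l
    simp only [regLag, lag, hb x y, ha, hσdef]
    have e1 : ⟪l, A x + B y - c⟫ = ⟪l, A x - c⟫ + ⟪(ContinuousLinearMap.adjoint B) l, y⟫ := by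
      rw [ContinuousLinearMap.adjoint_inner_left, ← inner_add_right]
      congr 1; abel
    have e2 : ‖y - yc‖ ^ 2 = ‖y‖ ^ 2 - 2 * ⟪y, yc⟫ + ‖yc‖ ^ 2 := norm_sub_sq_real y yc
    have e3 : ⟪b x - (ContinuousLinearMap.adjoint B) l + pp • yc, y⟫
        = ⟪b x, y⟫ - ⟪(ContinuousLinearMap.adjoint B) l, y⟫ + pp * ⟪y, yc⟫ := by
      rw [inner_add_left, inner_sub_left, real_inner_smul_left, real_inner_comm yc y]
    rw [e1, e2, e3]
    ring
  -- Step 4: maximality in quadratic form.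
  have hmaxq : ∀ (x : E n) (l : E p), ∀ z ∈ Y,
      ⟪a x l, z⟫ - σ / 2 * ‖z‖ ^ 2 ≤ ⟪a x l, ystar x l⟫ - σ / 2 * ‖ystar x l‖ ^ 2 := by
    intro x l z hz
    have h := hystar x l z hz
    rw [hreg x z l, hreg x (ystar x l) l] at h
    linarith
  -- Step 5: conclude.
  intro x₁ x₂ l₁ l₂
  have hcontr := quad_max_contraction' hYcvx hσ (hystarY x₁ l₁) (hystarY x₂ l₂)
    (hmaxq x₁ l₁) (hmaxq x₂ l₂)
  have hadiff : a x₁ l₁ - a x₂ l₂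
      = (b x₁ - b x₂) - (ContinuousLinearMap.adjoint B) (l₁ - l₂) := by
    simp only [ha, map_sub]
    abel
  have hBadj : ‖(ContinuousLinearMap.adjoint B) (l₁ - l₂)‖ ≤ ‖B‖ * ‖l₁ - l₂‖ := by
    calc ‖(ContinuousLinearMap.adjoint B) (l₁ - l₂)‖
        ≤ ‖ContinuousLinearMap.adjoint B‖ * ‖l₁ - l₂‖ :=
          (ContinuousLinearMap.adjoint B).le_opNorm _
      _ = ‖B‖ * ‖l₁ - l₂‖ := by rw [ContinuousLinearMap.adjoint.norm_map B]
  have hanorm : ‖a x₁ l₁ - a x₂ l₂‖ ≤ L * ‖x₁ - x₂‖ + ‖B‖ * ‖l₁ - l₂‖ := by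
    rw [hadiff]
    calc ‖(b x₁ - b x₂) - (ContinuousLinearMap.adjoint B) (l₁ - l₂)‖
        ≤ ‖b x₁ - b x₂‖ + ‖(ContinuousLinearMap.adjoint B) (l₁ - l₂)‖ := norm_sub_le _ _
      _ ≤ L * ‖x₁ - x₂‖ + ‖B‖ * ‖l₁ - l₂‖ := add_le_add (hbL x₁ x₂) hBadj
  set s : ℝ := Real.sqrt (‖x₁ - x₂‖ ^ 2 + ‖l₁ - l₂‖ ^ 2) with hs
  have hus : ‖x₁ - x₂‖ ≤ s := by
    rw [hs, Real.le_sqrt (norm_nonneg _) (by positivity)]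
    nlinarith [sq_nonneg ‖l₁ - l₂‖]
  have hvs : ‖l₁ - l₂‖ ≤ s := by
    rw [hs, Real.le_sqrt (norm_nonneg _) (by positivity)]
    nlinarith [sq_nonneg ‖x₁ - x₂‖]
  have hcomb : L * ‖x₁ - x₂‖ + ‖B‖ * ‖l₁ - l₂‖ ≤ (L + ‖B‖) * s := by
    nlinarith [hus, hvs, hL.le, norm_nonneg B]
  calc ‖ystar x₁ l₁ - ystar x₂ l₂‖
      ≤ ‖a x₁ l₁ - a x₂ l₂‖ / σ := hcontr
    _ ≤ ((L + ‖B‖) * s) / σ :=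
        div_le_div_of_nonneg_right (le_trans hanorm hcomb) hσ.le
    _ = (L + ‖B‖) / σ * s := by ring
end
end

section
/- Assume (Lip) and that y ↦ f(x,y) is affine for every x ∈ ℝⁿ. Let q_k ≥ q_{k+1} > 0 and p_k ≥ p_{k+1} ≥ 0, let x_k ∈ ℝⁿ, y_k ∈ Y, λ_k ∈ ℝᵖ, and let x_{k+1} ∈ ℝⁿ, λ_{k+1} ∈ ℝᵖ be arbitrary. Define L̄_k(x,y,λ) := L(x,y,λ) − (q_k/2)‖y‖² − (p_k/2)‖y−y_k‖², y_{k+1} := the maximizer of L̄_k(x_k,·,λ_k) over Y, L̄_{k+1}(x,y,λ) := L(x,y,λ) − (q_{k+1}/2)‖y‖² − (p_{k+1}/2)‖y−y_{k+1}‖², y_{k+2} := the maximizer of L̄_{k+1}(x_{k+1},·,λ_{k+1}) over Y, Φ_k(x,λ) := max_{y∈Y}L̄_k(x,y,λ), Φ_{k+1}(x,λ) := max_{y∈Y}L̄_{k+1}(x,y,λ), L_A := L+‖A‖, L_B := L+‖B‖. Then Φ_{k+1}(x_{k+1},λ_{k+1}) − Φ_k(x_k,λ_k) ≤ ⟨∇_xL(x_k,y_{k+1},λ_k),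 x_{k+1}−x_k⟩ − ⟨Ax_k + By_{k+1} − c, λ_{k+1}−λ_k⟩ + (1/2)·(L_A + L_B²/(q_k+p_k) + 2L_B²/q_k)·‖(x_{k+1};λ_{k+1}) − (x_k;λ_k)‖² + p_k·‖y_{k+1}−y_k‖² + ((p_k−p_{k+1})/2)·‖y_{k+2}−y_{k+1}‖² + ((q_k−q_{k+1})/2)·‖y_{k+2}‖². -/
open scoped RealInnerProductSpace

noncomputable section

/- ### Auxiliary lemmas -/

lemma norm_combo_sq {m : ℕ} (u v : E m) (t : ℝ) :
    ‖u + t • (v - u)‖ ^ 2 = (1 - t) * ‖u‖ ^ 2 + t * ‖v‖ ^ 2 - t * (1 - t) * ‖v - u‖ ^ 2 := by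
  have h1 := norm_add_sq_real u (t • (v - u))
  have h2 := norm_sub_sq_real v u
  have h3 : ⟪u, t • (v - u)⟫ = t * (⟪u, v⟫ - ⟪u, u⟫) := by
    rw [real_inner_smul_right, inner_sub_right]
  have h4 : ‖t • (v - u)‖ ^ 2 = t ^ 2 * ‖v - u‖ ^ 2 := by
    rw [norm_smul]; simp [mul_pow, Real.norm_eq_abs, sq_abs]
  have h5 : ⟪u, u⟫ = ‖u‖ ^ 2 := real_inner_self_eq_norm_sq u
  have h6 : ⟪u, v⟫ = ⟪v, u⟫ := real_inner_comm v u
  linear_combination h1 + 2*h3 + h4 + t*h2 + 2*t*h6 - 2*t*h5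

lemma regLag_combo {n m p : ℕ} (f : E n → E m → ℝ) (A : E n →L[ℝ] E p) (B : E m →L[ℝ] E p)
    (c : E p)
    (haff : ∀ (x : E n) (y₁ y₂ : E m) (t : ℝ),
      f x (y₁ + t • (y₂ - y₁)) = f x y₁ + t * (f x y₂ - f x y₁))
    (q pp : ℝ) (yc : E m) (x : E n) (l : E p) (y₁ y₂ : E m) (t : ℝ) :
    regLag f A B c q pp yc x (y₁ + t • (y₂ - y₁)) l
      = (1 - t) * regLag f A B c q pp yc x y₁ l + t * regLag f A B c q pp yc x y₂ l
        + (q + pp) / 2 * (t * (1 - t)) * ‖y₂ - y₁‖ ^ 2 := by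
  have hB : (B (y₁ + t • (y₂ - y₁)) : E p) = B y₁ + t • (B y₂ - B y₁) := by
    simp [map_add, map_smul, map_sub]
  have hinner : ⟪l, A x + B (y₁ + t • (y₂ - y₁)) - c⟫
      = (1 - t) * ⟪l, A x + B y₁ - c⟫ + t * ⟪l, A x + B y₂ - c⟫ := by
    rw [hB]
    simp only [inner_add_right, inner_sub_right, real_inner_smul_right]
    ring
  have hn1 := norm_combo_sq y₁ y₂ t
  have hn2 : ‖(y₁ + t • (y₂ - y₁)) - yc‖ ^ 2
      = (1 - t) * ‖y₁ - yc‖ ^ 2 + t * ‖y₂ - yc‖ ^ 2 - t * (1 - t) * ‖y₂ - y₁‖ ^ 2 := by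
    have e1 : (y₂ - yc) - (y₁ - yc) = y₂ - y₁ := by abel
    have h := norm_combo_sq (y₁ - yc) (y₂ - yc) t
    rw [e1] at h
    rw [show y₁ - yc + t • (y₂ - y₁) = y₁ + t • (y₂ - y₁) - yc from by abel] at h
    exact h
  unfold regLag lag
  rw [haff x y₁ y₂ t, hinner, hn1, hn2]
  ring

/-- Quadratic growth at a maximizer of the (q+pp)-strongly concave `regLag` over a convex set. -/
lemma max_quad {n m p : ℕ} (f : E n → E m → ℝ) (A : E n →L[ℝ] E p) (B : E m →L[ℝ] E p)
    (c : E p)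
    (haff : ∀ (x : E n) (y₁ y₂ : E m) (t : ℝ),
      f x (y₁ + t • (y₂ - y₁)) = f x y₁ + t * (f x y₂ - f x y₁))
    (q pp : ℝ) (yc : E m) (x : E n) (l : E p) (Y : Set (E m)) (hYcvx : Convex ℝ Y)
    (w : E m) (hw : w ∈ Y)
    (hmax : ∀ z ∈ Y, regLag f A B c q pp yc x z l ≤ regLag f A B c q pp yc x w l)
    (z : E m) (hz : z ∈ Y) :
    regLag f A B c q pp yc x z l + (q + pp) / 2 * ‖z - w‖ ^ 2
      ≤ regLag f A B c q pp yc x w l := by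
  set F := fun y => regLag f A B c q pp yc x y l with hF
  have key : ∀ t ∈ Set.Ioo (0:ℝ) 1,
      F z + (q + pp) / 2 * (1 - t) * ‖z - w‖ ^ 2 ≤ F w := by
    intro t ht
    have hmem : w + t • (z - w) ∈ Y :=
      hYcvx.add_smul_sub_mem hw hz ⟨le_of_lt ht.1, le_of_lt ht.2⟩
    have h1 := hmax _ hmem
    rw [regLag_combo f A B c haff q pp yc x l w z t] at h1
    have ht0 : 0 < t := ht.1
    nlinarith [h1, ht0]
  have tend : Filter.Tendsto (fun t : ℝ => F z + (q + pp) / 2 * (1 - t) * ‖z - w‖ ^ 2)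
      (nhdsWithin 0 (Set.Ioi 0)) (nhds (F z + (q + pp) / 2 * ‖z - w‖ ^ 2)) := by
    have : Continuous (fun t : ℝ => F z + (q + pp) / 2 * (1 - t) * ‖z - w‖ ^ 2) := by
      continuity
    have h0 := this.tendsto (0 : ℝ)
    simp only [sub_zero, mul_one] at h0
    exact h0.mono_left nhdsWithin_le_nhds
  refine le_of_tendsto tend ?_
  filter_upwards [Ioo_mem_nhdsGT_of_mem (Set.mem_Ico.mpr ⟨le_refl _, zero_lt_one⟩)] with t ht
  exact key t ht

lemma grad_inner {d : ℕ} (g : E d → ℝ) (x v : E d) :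
    ⟪gradient g x, v⟫ = fderiv ℝ g x v := by
  rw [gradient]
  exact InnerProductSpace.toDual_symm_apply

lemma fderiv_sub_norm_eq' {d : ℕ} (g h : E d → ℝ) (a b : E d) :
    ‖fderiv ℝ g a - fderiv ℝ h b‖ = ‖gradient g a - gradient h b‖ := by
  have ha : fderiv ℝ g a = InnerProductSpace.toDual ℝ (E d) (gradient g a) := by
    rw [gradient, LinearIsometryEquiv.apply_symm_apply]
  have hb : fderiv ℝ h b = InnerProductSpace.toDual ℝ (E d) (gradient h b) := by
    rw [gradient, LinearIsometryEquiv.apply_symm_apply]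
  rw [ha, hb, ← LinearIsometryEquiv.map_sub, LinearIsometryEquiv.norm_map]

lemma contDiff_slice {n m : ℕ} (f : E n → E m → ℝ) (hf : ContDiff ℝ 1 (Function.uncurry f))
    (y : E m) : ContDiff ℝ 1 (fun x => f x y) :=
  hf.comp (contDiff_id.prodMk contDiff_const)

/-- Descent lemma: quadratic upper bound from a Lipschitz gradient. -/
lemma descent_lemma {d : ℕ} (g : E d → ℝ) (hg : ContDiff ℝ 1 g) (L : ℝ)
    (hlip : ∀ a b : E d, ‖gradient g a - gradient g b‖ ≤ L * ‖a - b‖) (x₁ x₂ : E d) :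
    g x₂ ≤ g x₁ + ⟪gradient g x₁, x₂ - x₁⟫ + L / 2 * ‖x₂ - x₁‖ ^ 2 := by
  set dvec := x₂ - x₁ with hd
  have hdiff : Differentiable ℝ g := hg.differentiable one_ne_zero
  have hγ : ∀ t : ℝ, HasDerivAt (fun s : ℝ => x₁ + s • dvec) dvec t := by
    intro t
    simpa using ((hasDerivAt_id t).smul_const dvec).const_add x₁
  have hcomp : ∀ t : ℝ, HasDerivAt (fun s : ℝ => g (x₁ + s • dvec))
      (fderiv ℝ g (x₁ + t • dvec) dvec) t := by
    intro t
    exact ((hdiff (x₁ + t • dvec)).hasFDerivAt).comp_hasDerivAt t (hγ t)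
  have hcont : Continuous fun t : ℝ => fderiv ℝ g (x₁ + t • dvec) dvec := by
    have h1 : Continuous fun z : E d => fderiv ℝ g z := hg.continuous_fderiv one_ne_zero
    have h2 : Continuous fun t : ℝ => x₁ + t • dvec :=
      continuous_const.add (continuous_id.smul continuous_const)
    exact (isBoundedBilinearMap_apply.continuous.comp
      ((h1.comp h2).prodMk continuous_const))
  have hftc : g (x₁ + (1:ℝ) • dvec) - g (x₁ + (0:ℝ) • dvec)
      = ∫ t in (0:ℝ)..1, fderiv ℝ g (x₁ + t • dvec) dvec := by
    rw [← intervalIntegral.integral_eq_sub_of_hasDerivAt (fun t _ => hcomp t)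
      (hcont.intervalIntegrable 0 1)]
  have hbound : ∀ t ∈ Set.Icc (0:ℝ) 1,
      fderiv ℝ g (x₁ + t • dvec) dvec ≤ fderiv ℝ g x₁ dvec + L * t * ‖dvec‖ ^ 2 := by
    intro t ht
    have h1 : (fderiv ℝ g (x₁ + t • dvec) - fderiv ℝ g x₁) dvec
        ≤ ‖fderiv ℝ g (x₁ + t • dvec) - fderiv ℝ g x₁‖ * ‖dvec‖ :=
      (le_abs_self _).trans ((fderiv ℝ g (x₁ + t • dvec)
        - fderiv ℝ g x₁).le_opNorm dvec |>.trans_eq' (by rw [Real.norm_eq_abs]))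
    have h2 : ‖fderiv ℝ g (x₁ + t • dvec) - fderiv ℝ g x₁‖ ≤ L * (t * ‖dvec‖) := by
      rw [fderiv_sub_norm_eq']
      have := hlip (x₁ + t • dvec) x₁
      simpa [norm_smul, abs_of_nonneg ht.1] using this
    have h3 : (fderiv ℝ g (x₁ + t • dvec) - fderiv ℝ g x₁) dvec
        = fderiv ℝ g (x₁ + t • dvec) dvec - fderiv ℝ g x₁ dvec := rfl
    nlinarith [norm_nonneg dvec, h1, h2, mul_le_mul_of_nonneg_right h2 (norm_nonneg dvec)]
  have hint : (∫ t in (0:ℝ)..1, fderiv ℝ g (x₁ + t • dvec) dvec)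
      ≤ ∫ t in (0:ℝ)..1, (fderiv ℝ g x₁ dvec + L * t * ‖dvec‖ ^ 2) := by
    apply intervalIntegral.integral_mono_on zero_le_one
      (hcont.intervalIntegrable 0 1)
      ((show Continuous fun t : ℝ => fderiv ℝ g x₁ dvec + L * t * ‖dvec‖ ^ 2 by
        fun_prop).intervalIntegrable 0 1)
    exact hbound
  have hval : (∫ t in (0:ℝ)..1, (fderiv ℝ g x₁ dvec + L * t * ‖dvec‖ ^ 2))
      = fderiv ℝ g x₁ dvec + L / 2 * ‖dvec‖ ^ 2 := by
    rw [intervalIntegral.integral_add (intervalIntegrable_const)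
      ((show Continuous fun t : ℝ => L * t * ‖dvec‖ ^ 2 by fun_prop).intervalIntegrable 0 1)]
    simp only [intervalIntegral.integral_const, smul_eq_mul, mul_one, sub_zero, one_smul]
    have : (∫ t in (0:ℝ)..1, L * t * ‖dvec‖ ^ 2)
        = (L * ‖dvec‖ ^ 2) * ∫ t in (0:ℝ)..1, t := by
      rw [← intervalIntegral.integral_const_mul]
      congr 1; funext t; ring
    rw [this, integral_id]
    ring
  have hx2 : x₁ + (1:ℝ) • dvec = x₂ := by rw [hd]; module
  have hx1 : x₁ + (0:ℝ) • dvec = x₁ := by rw [hd]; module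
  rw [hx2, hx1] at hftc
  rw [grad_inner]
  linarith [hftc, hint.trans_eq hval]

lemma gradxL_inner {n m p : ℕ} (f : E n → E m → ℝ) (hf : ContDiff ℝ 1 (Function.uncurry f))
    (A : E n →L[ℝ] E p) (B : E m →L[ℝ] E p) (c : E p) (x : E n) (y : E m) (l : E p) (v : E n) :
    ⟪gradxL f A B c x y l, v⟫ = ⟪gradient (fun x' => f x' y) x, v⟫ - ⟪l, A v⟫ := by
  have hdfy : DifferentiableAt ℝ (fun x' => f x' y) x :=
    ((contDiff_slice f hf y).differentiable one_ne_zero) x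
  have hlin : HasFDerivAt (fun x' : E n => (⟪l, A x'⟫ : ℝ))
      ((innerSL ℝ l).comp A) x := ((innerSL ℝ l).comp A).hasFDerivAt
  have heq : ∀ x' : E n, lag f A B c x' y l = f x' y - (⟪l, A x'⟫ + ⟪l, B y - c⟫) := by
    intro x'
    rw [lag, add_sub_assoc, inner_add_right]
  have hder : HasFDerivAt (fun x' => lag f A B c x' y l)
      (fderiv ℝ (fun x' => f x' y) x - (innerSL ℝ l).comp A) x := by
    have h1 : HasFDerivAt (fun x' => f x' y) (fderiv ℝ (fun x' => f x' y) x) x :=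
      hdfy.hasFDerivAt
    have h2 : HasFDerivAt (fun x' : E n => (⟪l, A x'⟫ + ⟪l, B y - c⟫ : ℝ))
        ((innerSL ℝ l).comp A) x := hlin.add_const _
    have := h1.sub h2
    refine this.congr_of_eventuallyEq ?_
    filter_upwards with x'
    rw [heq x']; rfl
  rw [gradxL, gradient, InnerProductSpace.toDual_symm_apply, hder.fderiv,
    ContinuousLinearMap.sub_apply, grad_inner]
  rfl

set_option maxHeartbeats 1000000 in
lemma final_numeric (L nA nB qk pk X Λ D s b ip : ℝ)
    (hL : 0 < L) (hnA : 0 ≤ nA) (hnB : 0 ≤ nB) (hqk : 0 < qk) (hpk : 0 ≤ pk)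
    (hX : 0 ≤ X) (hΛ : 0 ≤ Λ) (hD : 0 ≤ D) (hs : 0 ≤ s) (hb : 0 ≤ b)
    (hσD : (qk + pk) * D ^ 2 ≤ (L * X + nB * Λ) * D)
    (hip : ip ≤ (s + D) * b) :
    pk * ip + pk / 2 * b ^ 2 - (qk + pk) / 2 * s ^ 2 + (L * X + nB * Λ) * D
      - (qk + pk) / 2 * D ^ 2 + L / 2 * X ^ 2 + nA * (Λ * X)
    ≤ 1 / 2 * ((L + nA) + (L + nB) ^ 2 / (qk + pk) + 2 * (L + nB) ^ 2 / qk) * (X ^ 2 + Λ ^ 2)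
      + pk * b ^ 2 := by
  set K := L * X + nB * Λ with hK
  have hσ : 0 < qk + pk := by linarith
  have hK0 : 0 ≤ K := add_nonneg (mul_nonneg hL.le hX) (mul_nonneg hnB hΛ)
  have hσDle : (qk + pk) * D ≤ K := by
    rcases eq_or_lt_of_le hD with h | h
    · rw [← h]; simpa using hK0
    · have h' : ((qk + pk) * D) * D ≤ K * D := by nlinarith [hσD]
      exact le_of_mul_le_mul_right h' h
  have hM : 0 ≤ (L + nB) ^ 2 := sq_nonneg _
  have hS : 0 ≤ X ^ 2 + Λ ^ 2 := by positivity
  have h2 : K ^ 2 ≤ (L + nB) ^ 2 * (X ^ 2 + Λ ^ 2) := by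
    nlinarith [sq_nonneg (L * Λ - nB * X), sq_nonneg (X - Λ), mul_nonneg hL.le hnB,
      mul_nonneg hX hΛ]
  have h1 : K * D - (qk + pk) / 2 * D ^ 2
      ≤ (L + nB) ^ 2 * (X ^ 2 + Λ ^ 2) / (2 * (qk + pk)) := by
    rw [le_div_iff₀ (by positivity)]
    nlinarith [sq_nonneg (K - (qk + pk) * D), h2]
  have h3a : pk * (s * b) ≤ (qk + pk) / 2 * s ^ 2 + pk ^ 2 / (2 * (qk + pk)) * b ^ 2 := by
    rw [← sub_nonneg]
    have e : (qk + pk) / 2 * s ^ 2 + pk ^ 2 / (2 * (qk + pk)) * b ^ 2 - pk * (s * b)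
        = ((qk + pk) * s - pk * b) ^ 2 / (2 * (qk + pk)) := by
      field_simp; ring
    rw [e]; positivity
  have h3b : pk * (D * b) ≤ pk * (K * b) / (qk + pk) := by
    rw [le_div_iff₀ hσ]
    nlinarith [mul_le_mul_of_nonneg_left hσDle (mul_nonneg hpk hb)]
  have h3c : pk * (K * b) / (qk + pk)
      ≤ pk * K ^ 2 / (2 * qk * (qk + pk)) + pk * qk / (2 * (qk + pk)) * b ^ 2 := by
    rw [← sub_nonneg]
    have e : pk * K ^ 2 / (2 * qk * (qk + pk)) + pk * qk / (2 * (qk + pk)) * b ^ 2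
        - pk * (K * b) / (qk + pk) = pk * (K - qk * b) ^ 2 / (2 * qk * (qk + pk)) := by
      field_simp; ring
    rw [e]; positivity
  have h3d : pk * K ^ 2 / (2 * qk * (qk + pk)) ≤ (L + nB) ^ 2 * (X ^ 2 + Λ ^ 2) / (2 * qk) := by
    rw [div_le_div_iff₀ (by positivity) (by positivity)]
    have t1 : pk * K ^ 2 ≤ pk * ((L + nB) ^ 2 * (X ^ 2 + Λ ^ 2)) :=
      mul_le_mul_of_nonneg_left h2 hpk
    have t2 : pk * ((L + nB) ^ 2 * (X ^ 2 + Λ ^ 2))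
        ≤ (qk + pk) * ((L + nB) ^ 2 * (X ^ 2 + Λ ^ 2)) :=
      mul_le_mul_of_nonneg_right (by linarith) (mul_nonneg hM hS)
    have t3 := mul_le_mul_of_nonneg_right (t1.trans t2) (by positivity : (0:ℝ) ≤ 2 * qk)
    nlinarith [t3]
  have hfin0 : L / 2 * X ^ 2 + nA * (Λ * X) ≤ 1 / 2 * (L + nA) * (X ^ 2 + Λ ^ 2) := by
    nlinarith [sq_nonneg (X - Λ), hL.le, sq_nonneg Λ, mul_nonneg hnA (sq_nonneg (X - Λ))]
  have hipb : pk * ip ≤ pk * (s * b) + pk * (D * b) := by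
    have := mul_le_mul_of_nonneg_left hip hpk
    nlinarith [this]
  have eqb : pk / 2 * b ^ 2 + pk ^ 2 / (2 * (qk + pk)) * b ^ 2 + pk * qk / (2 * (qk + pk)) * b ^ 2
      = pk * b ^ 2 := by field_simp; ring
  have eqr : 1 / 2 * ((L + nA) + (L + nB) ^ 2 / (qk + pk) + 2 * (L + nB) ^ 2 / qk)
        * (X ^ 2 + Λ ^ 2)
      = 1 / 2 * (L + nA) * (X ^ 2 + Λ ^ 2)
        + (L + nB) ^ 2 * (X ^ 2 + Λ ^ 2) / (2 * (qk + pk))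
        + ((L + nB) ^ 2 * (X ^ 2 + Λ ^ 2) / (2 * qk)
          + (L + nB) ^ 2 * (X ^ 2 + Λ ^ 2) / (2 * qk)) := by
    field_simp; ring
  have slack : 0 ≤ (L + nB) ^ 2 * (X ^ 2 + Λ ^ 2) / (2 * qk) := by positivity
  linarith [h1, h3a, h3b.trans h3c, h3d, hfin0, hipb, eqb, eqr, slack]

set_option maxHeartbeats 2000000 in
/-- Lemma 3.4: upper bound for the one-step difference of
`Φ_k(x,λ) = max_{y∈Y} L̄_k(x,y,λ)` in the nonconvex–linear setting. -/
theorem Phi_descent_estimate_linear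
    {n m p : ℕ} (Y : Set (E m))
    (hYne : Y.Nonempty) (hYcvx : Convex ℝ Y) (hYcpt : IsCompact Y)
    (f : E n → E m → ℝ) (hf : ContDiff ℝ 1 (Function.uncurry f))
    (A : E n →L[ℝ] E p) (B : E m →L[ℝ] E p) (c : E p)
    (L : ℝ) (hL : 0 < L) (hlip : LipGrad f L)
    (haff : ∀ (x : E n) (y₁ y₂ : E m) (t : ℝ),
      f x (y₁ + t • (y₂ - y₁)) = f x y₁ + t * (f x y₂ - f x y₁))
    (qk qk1 pk pk1 : ℝ) (hq : qk ≥ qk1) (hq1 : 0 < qk1) (hp : pk ≥ pk1) (hp1 : 0 ≤ pk1)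
    (xk : E n) (yk : E m) (lk : E p) (hyk : yk ∈ Y)
    (xk1 : E n) (lk1 : E p)
    (yk1 : E m) (hyk1Y : yk1 ∈ Y)
    (hyk1 : ∀ z ∈ Y, regLag f A B c qk pk yk xk z lk ≤ regLag f A B c qk pk yk xk yk1 lk)
    (yk2 : E m) (hyk2Y : yk2 ∈ Y)
    (hyk2 : ∀ z ∈ Y,
      regLag f A B c qk1 pk1 yk1 xk1 z lk1 ≤ regLag f A B c qk1 pk1 yk1 xk1 yk2 lk1) :
    sSup ((fun y => regLag f A B c qk1 pk1 yk1 xk1 y lk1) '' Y)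
      - sSup ((fun y => regLag f A B c qk pk yk xk y lk) '' Y)
    ≤ ⟪gradxL f A B c xk yk1 lk, xk1 - xk⟫
      - ⟪A xk + B yk1 - c, lk1 - lk⟫
      + 1 / 2 * ((L + ‖A‖) + (L + ‖B‖) ^ 2 / (qk + pk) + 2 * (L + ‖B‖) ^ 2 / qk)
          * (‖xk1 - xk‖ ^ 2 + ‖lk1 - lk‖ ^ 2)
      + pk * ‖yk1 - yk‖ ^ 2
      + (pk - pk1) / 2 * ‖yk2 - yk1‖ ^ 2
      + (qk - qk1) / 2 * ‖yk2‖ ^ 2 := by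
  have hq0 : 0 < qk := lt_of_lt_of_le hq1 hq
  have hp0 : 0 ≤ pk := le_trans hp1 hp
  -- the two suprema are attained at the given maximizers
  have hS2 : sSup ((fun y => regLag f A B c qk1 pk1 yk1 xk1 y lk1) '' Y)
      = regLag f A B c qk1 pk1 yk1 xk1 yk2 lk1 := by
    apply IsGreatest.csSup_eq
    exact ⟨⟨yk2, hyk2Y, rfl⟩, by rintro r ⟨z, hz, rfl⟩; exact hyk2 z hz⟩
  have hS0 : sSup ((fun y => regLag f A B c qk pk yk xk y lk) '' Y)
      = regLag f A B c qk pk yk xk yk1 lk := by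
    apply IsGreatest.csSup_eq
    exact ⟨⟨yk1, hyk1Y, rfl⟩, by rintro r ⟨z, hz, rfl⟩; exact hyk1 z hz⟩
  rw [hS2, hS0]
  -- existence of a maximizer `yp` of the intermediate function F₁
  have hfy : Continuous fun y => f xk1 y :=
    hf.continuous.comp (continuous_const.prodMk continuous_id)
  have hcont1 : Continuous fun y => regLag f A B c qk pk yk xk1 y lk1 := by
    unfold regLag lag
    refine ((Continuous.sub ?_ ?_).sub ?_).sub ?_
    · exact hfy
    · exact Continuous.inner continuous_const
        ((continuous_const.add B.continuous).sub continuous_const)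
    · exact continuous_const.mul (continuous_norm.pow 2)
    · exact continuous_const.mul (((continuous_id.sub continuous_const).norm).pow 2)
  obtain ⟨yp, hypY, hypmax'⟩ := hYcpt.exists_isMaxOn hYne hcont1.continuousOn
  have hypmax : ∀ z ∈ Y, regLag f A B c qk pk yk xk1 z lk1
      ≤ regLag f A B c qk pk yk xk1 yp lk1 := fun z hz => hypmax' hz
  -- abbreviations
  set X := ‖xk1 - xk‖ with hX
  set Λ := ‖lk1 - lk‖ with hΛ
  set D := ‖yp - yk1‖ with hD
  set sn := ‖yk2 - yp‖ with hsn
  set bn := ‖yk1 - yk‖ with hbn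
  -- quadratic growth inequalities
  have hqg1 := max_quad f A B c haff qk pk yk xk lk Y hYcvx yk1 hyk1Y hyk1 yp hypY
  have hqg2 := max_quad f A B c haff qk pk yk xk1 lk1 Y hYcvx yp hypY hypmax yk1 hyk1Y
  have hqg3 := max_quad f A B c haff qk pk yk xk1 lk1 Y hYcvx yp hypY hypmax yk2 hyk2Y
  rw [norm_sub_rev yk1 yp] at hqg2
  rw [← hD] at hqg1 hqg2
  rw [← hsn] at hqg3
  -- the difference of Lagrangians at two (x,λ) points
  have hlagdiff : ∀ y : E m, regLag f A B c qk pk yk xk1 y lk1 - regLag f A B c qk pk yk xk y lk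
      = (f xk1 y - f xk y) - ⟪lk1, A xk1 + B y - c⟫ + ⟪lk, A xk + B y - c⟫ := by
    intro y; rw [regLag, regLag, lag, lag]; ring
  -- mean-value bound for x ↦ f(x,yp) − f(x,yk1)
  have hdslice : ∀ y : E m, Differentiable ℝ (fun x => f x y) := fun y =>
    (contDiff_slice f hf y).differentiable one_ne_zero
  have hφ : ‖(f xk1 yp - f xk1 yk1) - (f xk yp - f xk yk1)‖ ≤ (L * D) * X := by
    have hdiff : ∀ x : E n, DifferentiableAt ℝ (fun x' => f x' yp - f x' yk1) x := fun x =>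
      ((hdslice yp) x).sub ((hdslice yk1) x)
    have hbd : ∀ x : E n, ‖fderiv ℝ (fun x' => f x' yp - f x' yk1) x‖ ≤ L * D := by
      intro x
      rw [fderiv_fun_sub ((hdslice yp) x) ((hdslice yk1) x), fderiv_sub_norm_eq']
      exact hlip.2.1 x yp yk1
    have := Convex.norm_image_sub_le_of_norm_fderiv_le (f := fun x' => f x' yp - f x' yk1)
      (fun x _ => hdiff x) (fun x _ => hbd x) convex_univ (Set.mem_univ xk) (Set.mem_univ xk1)
    simpa [hX] using this
  -- bound on the e-difference at yp versus yk1
  have hBop : ‖B yp - B yk1‖ ≤ ‖B‖ * D := by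
    rw [← map_sub]
    exact B.le_opNorm _
  have hE : (regLag f A B c qk pk yk xk1 yp lk1 - regLag f A B c qk pk yk xk yp lk)
      - (regLag f A B c qk pk yk xk1 yk1 lk1 - regLag f A B c qk pk yk xk yk1 lk)
      ≤ (L * X + ‖B‖ * Λ) * D := by
    rw [hlagdiff yp, hlagdiff yk1]
    have i1 : ⟪lk1, A xk1 + B yp - c⟫ - ⟪lk1, A xk1 + B yk1 - c⟫ = ⟪lk1, B yp - B yk1⟫ := by
      rw [← inner_sub_right]; congr 1; abel
    have i2 : ⟪lk, A xk + B yp - c⟫ - ⟪lk, A xk + B yk1 - c⟫ = ⟪lk, B yp - B yk1⟫ := by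
      rw [← inner_sub_right]; congr 1; abel
    have i3 : ⟪lk1, B yp - B yk1⟫ - ⟪lk, B yp - B yk1⟫ = ⟪lk1 - lk, B yp - B yk1⟫ :=
      (inner_sub_left _ _ _).symm
    have i4 : |⟪lk1 - lk, B yp - B yk1⟫| ≤ Λ * (‖B‖ * D) := by
      refine (abs_real_inner_le_norm _ _).trans ?_
      exact mul_le_mul_of_nonneg_left hBop (norm_nonneg _)
    have i5 : (f xk1 yp - f xk1 yk1) - (f xk yp - f xk yk1) ≤ (L * D) * X :=
      (le_abs_self _).trans (by rw [← Real.norm_eq_abs]; exact hφ)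
    have i6 : -⟪lk1 - lk, B yp - B yk1⟫ ≤ Λ * (‖B‖ * D) := by
      have := neg_abs_le ⟪lk1 - lk, B yp - B yk1⟫
      linarith [i4]
    nlinarith [i1, i2, i3, i5, i6]
  -- bound on D from strong concavity
  have hσD : (qk + pk) * D ^ 2 ≤ (L * X + ‖B‖ * Λ) * D := by
    nlinarith [hqg1, hqg2, hE]
  -- descent estimate at yk1
  have hdesc := descent_lemma (fun x => f x yk1) (contDiff_slice f hf yk1) L
    (fun a b => hlip.1 a b yk1) xk xk1
  -- the gradient of the Lagrangian in x
  have hgx := gradxL_inner f hf A B c xk yk1 lk (xk1 - xk)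
  -- linear-algebraic expansion of the multiplier terms
  have heyk1 : regLag f A B c qk pk yk xk1 yk1 lk1 - regLag f A B c qk pk yk xk yk1 lk
      ≤ ⟪gradxL f A B c xk yk1 lk, xk1 - xk⟫ - ⟪A xk + B yk1 - c, lk1 - lk⟫
        + L / 2 * X ^ 2 + ‖A‖ * (Λ * X) := by
    rw [hlagdiff yk1]
    have e : (A xk1 : E p) + B yk1 - c = (A xk + B yk1 - c) + A (xk1 - xk) := by
      rw [map_sub]; abel
    have j1 : ⟪lk1, A xk1 + B yk1 - c⟫
        = ⟪lk, A xk + B yk1 - c⟫ + ⟪lk, A (xk1 - xk)⟫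
          + ⟪lk1 - lk, A xk + B yk1 - c⟫ + ⟪lk1 - lk, A (xk1 - xk)⟫ := by
      rw [e, inner_add_right]
      have a1 : ⟪lk1 - lk, A xk + B yk1 - c⟫ = ⟪lk1, A xk + B yk1 - c⟫ - ⟪lk, A xk + B yk1 - c⟫ :=
        inner_sub_left _ _ _
      have a2 : ⟪lk1 - lk, A (xk1 - xk)⟫ = ⟪lk1, A (xk1 - xk)⟫ - ⟪lk, A (xk1 - xk)⟫ :=
        inner_sub_left _ _ _
      linarith [a1, a2]
    have j3 : -⟪lk1 - lk, A (xk1 - xk)⟫ ≤ ‖A‖ * (Λ * X) := by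
      have t1 : |⟪lk1 - lk, A (xk1 - xk)⟫| ≤ Λ * (‖A‖ * X) := by
        refine (abs_real_inner_le_norm _ _).trans ?_
        exact mul_le_mul_of_nonneg_left (A.le_opNorm _) (norm_nonneg _)
      have := neg_abs_le ⟪lk1 - lk, A (xk1 - xk)⟫
      nlinarith [t1]
    have j4 : ⟪lk1 - lk, A xk + B yk1 - c⟫ = ⟪A xk + B yk1 - c, lk1 - lk⟫ :=
      real_inner_comm _ _
    have hdesc' : f xk1 yk1 - f xk yk1
        ≤ ⟪gradient (fun x => f x yk1) xk, xk1 - xk⟫ + L / 2 * X ^ 2 := by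
      have := hdesc
      rw [hX]
      linarith [this]
    linarith [j1, j3, j4, hdesc', hgx]
  -- the regularization-difference term at yk2
  have hTA : regLag f A B c qk1 pk1 yk1 xk1 yk2 lk1 - regLag f A B c qk pk yk xk1 yk2 lk1
      = (qk - qk1) / 2 * ‖yk2‖ ^ 2 + pk / 2 * ‖yk2 - yk‖ ^ 2 - pk1 / 2 * ‖yk2 - yk1‖ ^ 2 := by
    rw [regLag, regLag]; ring
  have hexp : ‖yk2 - yk‖ ^ 2
      = ‖yk2 - yk1‖ ^ 2 + 2 * ⟪yk2 - yk1, yk1 - yk⟫ + bn ^ 2 := by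
    rw [show yk2 - yk = (yk2 - yk1) + (yk1 - yk) from by abel, norm_add_sq_real, hbn]
  have hip : ⟪yk2 - yk1, yk1 - yk⟫ ≤ (sn + D) * bn := by
    have t := real_inner_le_norm (yk2 - yk1) (yk1 - yk)
    have tri : ‖yk2 - yk1‖ ≤ sn + D := by
      rw [show yk2 - yk1 = (yk2 - yp) + (yp - yk1) from by abel]
      exact norm_add_le _ _
    nlinarith [t, tri, norm_nonneg (yk1 - yk), norm_nonneg (yk2 - yk1)]
  rw [hexp] at hTA
  -- the numeric combination
  have FN := final_numeric L ‖A‖ ‖B‖ qk pk X Λ D sn bn ⟪yk2 - yk1, yk1 - yk⟫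
    hL (norm_nonneg A) (norm_nonneg B) hq0 hp0 (norm_nonneg _) (norm_nonneg _)
    (norm_nonneg _) (norm_nonneg _) (norm_nonneg _) hσD hip
  -- assemble everything
  linarith [hqg1, hqg3, hE, heyk1, hTA, FN]
end
end
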